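/- arXiv:2004.06742 — 2 statements merged into one kernel-verified Lean document; each statement's English description precedes it below -/
import Mathlib

section
/- Assume (H1) and (H2). For every ergodic σ-invariant Borel probability measure ν on Σ there exist ergodic F-invariant Borel probability measures μ₁ and μ₂ on Γ with π_*μ₁ = ν = π_*μ₂ such that χ(μ₁) ≤ 0 and χ(μ₂) ≥ 0. -/
/-!
Two functions `Σ → [0, 1]` have `F`-invariant graphs in `Γ` over a full-measure shift-invariant
set: the lower graph `ξ ↦ supₙ aₙ(ξ)` with `aₙ(ξ) = a_{[ξ₀ … ξ_{n-1}]}`, and the upper graph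
`ξ ↦ limₙ uₙ(ξ)` with `uₙ(ξ) = f_{[ξ_{-n} … ξ_{-1}]}(1)`. Pushing `ν` forward along either graph
gives an ergodic `F`-invariant measure on `Γ` over `ν`, with exponent `∫ log f'_{ξ₀}(graph ξ) dν`.

To sign these integrals, compare each graph with its approximants. As `f_i'` is nonincreasing
(H2), the mean value theorem shows that the logarithm `G` of the gap satisfies
`G ∘ σ - G ≤ log f'_{ξ₀}(a_{n+1})` for the lower graph, and `G ∘ σ - G ≥ log f'_{ξ₀}(uₙ)` for the
upper one. A function dominating the coboundary of a real measurable `G` has nonnegative integral,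
and letting `n → ∞` gives `χ ≥ 0` on the lower graph and `χ ≤ 0` on the upper one. The gaps are
positive almost surely unless `ν` is the Dirac mass at `0^ℤ`, where the graphs are the fixed points
`0` and `1` of `f₀` and `f₀'(0) > 1 > f₀'(1)`.
-/

open Set MeasureTheory Filter

namespace DGR

/-- The two-sided sequence space `Σ₂ = {0,1}^ℤ`. -/
abbrev Seq2 := ℤ → Fin 2

/-- The left shift map `σ`. -/
def shift (ξ : Seq2) : Seq2 := fun n => ξ (n + 1)

/-- The constant sequence `0^ℤ`. -/
def zeroSeq : Seq2 := fun _ => 0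

/-- The skew-product `F̃(ξ,x) = (σ ξ, f̃_{ξ₀} x)`. -/
def F (f0 f1 : ℝ → ℝ) (p : Seq2 × ℝ) : Seq2 × ℝ :=
  (shift p.1, if p.1 0 = 0 then f0 p.2 else f1 p.2)

/-- The fixed point `P = (0^ℤ, 1)`. -/
def Pfix : Seq2 × ℝ := (zeroSeq, 1)

/-- The fixed point `Q = (0^ℤ, 0)`. -/
def Qfix : Seq2 × ℝ := (zeroSeq, 0)

/-- `f_ξ^n = f_{ξ_{n-1}} ∘ ⋯ ∘ f_{ξ₀}`. -/
def fIter (f0 f1 : ℝ → ℝ) (ξ : Seq2) : ℕ → ℝ → ℝ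
  | 0, x => x
  | n + 1, x => (if ξ (n : ℤ) = 0 then f0 else f1) (fIter f0 f1 ξ n x)

/-- The derivative `(f_ξ^n)'(x)` (chain rule product). -/
def fIterDeriv (f0 f1 df0 df1 : ℝ → ℝ) (ξ : Seq2) : ℕ → ℝ → ℝ
  | 0, _ => 1
  | n + 1, x => fIterDeriv f0 f1 df0 df1 ξ n x *
      (if ξ (n : ℤ) = 0 then df0 else df1) (fIter f0 f1 ξ n x)

/-- `ξ⁺` is admissible for `x`: all forward iterates are defined and stay in `[0,1]`. -/
def forwardAdmissible (f0 f1 : ℝ → ℝ) (d : ℝ) (ξ : Seq2) (x : ℝ) : Prop :=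
  ∀ n : ℕ, fIter f0 f1 ξ n x ∈ Icc (0 : ℝ) 1 ∧ (ξ (n : ℤ) = 1 → d ≤ fIter f0 f1 ξ n x)

/-- `ξ⁻` is admissible for `x`: there is a backward orbit through `x` staying in `[0,1]`. -/
def backwardAdmissible (f0 f1 : ℝ → ℝ) (d : ℝ) (ξ : Seq2) (x : ℝ) : Prop :=
  ∃ y : ℕ → ℝ, y 0 = x ∧ ∀ m : ℕ,
    y m ∈ Icc (0 : ℝ) 1 ∧
    (ξ (-(m : ℤ) - 1) = 0 → f0 (y (m + 1)) = y m) ∧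
    (ξ (-(m : ℤ) - 1) = 1 → d ≤ y (m + 1) ∧ f1 (y (m + 1)) = y m)

/-- The maximal invariant set `Γ` of `F̃` in `Σ₂ × [0,1]`. -/
def Gamma (f0 f1 : ℝ → ℝ) (d : ℝ) : Set (Seq2 × ℝ) :=
  { p | forwardAdmissible f0 f1 d p.1 p.2 ∧ backwardAdmissible f0 f1 d p.1 p.2 }

/-- The subshift `Σ = π(Γ)` of admissible sequences. -/
def SigmaA (f0 f1 : ℝ → ℝ) (d : ℝ) : Set Seq2 := Prod.fst '' Gamma f0 f1 d

/-- `I_{ξ⁺}`. -/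
def Iplus (f0 f1 : ℝ → ℝ) (d : ℝ) (ξ : Seq2) : Set ℝ := { x | forwardAdmissible f0 f1 d ξ x }

/-- `I_{ξ⁻}`. -/
def Iminus (f0 f1 : ℝ → ℝ) (d : ℝ) (ξ : Seq2) : Set ℝ := { x | backwardAdmissible f0 f1 d ξ x }

/-- `I_ξ = I_{ξ⁺} ∩ I_{ξ⁻}`, the spine over `ξ`. -/
def Ifiber (f0 f1 : ℝ → ℝ) (d : ℝ) (ξ : Seq2) : Set ℝ := Iplus f0 f1 d ξ ∩ Iminus f0 f1 d ξ

/-- `x_{ξ⁺}`, the left endpoint of `I_{ξ⁺} = [x_{ξ⁺}, 1]`. -/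
noncomputable def xPlus (f0 f1 : ℝ → ℝ) (d : ℝ) (ξ : Seq2) : ℝ := sInf (Iplus f0 f1 d ξ)

/-- `x_{ξ⁻}`, the right endpoint of `I_{ξ⁻} = [0, x_{ξ⁻}]`. -/
noncomputable def xMinus (f0 f1 : ℝ → ℝ) (d : ℝ) (ξ : Seq2) : ℝ := sSup (Iminus f0 f1 d ξ)

/-- Hypothesis (H1), stated for strictly increasing differentiable extensions
`f0, f1 : ℝ → ℝ` with derivative functions `df0, df1`, whose restrictions to
`[0,1]` resp. `[d,1]` are the fiber maps. -/
structure H1 (f0 f1 df0 df1 : ℝ → ℝ) (d : ℝ) : Prop where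
  d_mem : d ∈ Ioo (0 : ℝ) 1
  mono0 : StrictMono f0
  mono1 : StrictMono f1
  hasDeriv0 : ∀ x, HasDerivAt f0 (df0 x) x
  hasDeriv1 : ∀ x, HasDerivAt f1 (df1 x) x
  contDeriv0 : ContinuousOn df0 (Icc 0 1)
  contDeriv1 : ContinuousOn df1 (Icc d 1)
  maps0 : MapsTo f0 (Icc 0 1) (Icc 0 1)
  surj0 : SurjOn f0 (Icc 0 1) (Icc 0 1)
  maps1 : MapsTo f1 (Icc d 1) (Icc 0 1)
  deriv0_zero : 1 < df0 0
  deriv0_one : df0 1 ∈ Ioo (0 : ℝ) 1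
  f0_above : ∀ x ∈ Ioo (0 : ℝ) 1, x < f0 x
  f1_d : f1 d = 0
  f1_below : ∀ x ∈ Icc d 1, f1 x < x
  deriv1_one : 0 < df1 1

/-- Hypothesis (H2): `f₀'` strictly decreasing, `f₁'` nonincreasing. -/
def H2 (df0 df1 : ℝ → ℝ) (d : ℝ) : Prop :=
  StrictAntiOn df0 (Icc 0 1) ∧ AntitoneOn df1 (Icc d 1)

/-- Hypothesis (H2+) with constant `M`. -/
def H2plus (df0 df1 : ℝ → ℝ) (d M : ℝ) : Prop :=
  1 < M ∧
  (∀ x ∈ Icc (0 : ℝ) 1, ∀ y ∈ Icc (0 : ℝ) 1, x < y →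
    M⁻¹ * (y - x) ≤ Real.log (df0 x) - Real.log (df0 y) ∧
      Real.log (df0 x) - Real.log (df0 y) ≤ M * (y - x)) ∧
  (∀ x ∈ Icc d 1, ∀ y ∈ Icc d 1, x < y →
    M⁻¹ * (y - x) ≤ Real.log (df1 x) - Real.log (df1 y) ∧
      Real.log (df1 x) - Real.log (df1 y) ≤ M * (y - x))

/-- The fiber Lyapunov exponent `χ(μ) = ∫ log f'_{ξ₀}(x) dμ(ξ,x)`. -/
noncomputable def lyap (df0 df1 : ℝ → ℝ) (μ : Measure (Seq2 × ℝ)) : ℝ :=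
  ∫ p, Real.log ((if p.1 0 = 0 then df0 else df1) p.2) ∂μ

/-- An `F`-invariant Borel probability measure on `Γ`. -/
def IsInvGamma (f0 f1 : ℝ → ℝ) (d : ℝ) (μ : Measure (Seq2 × ℝ)) : Prop :=
  IsProbabilityMeasure μ ∧ μ (Gamma f0 f1 d) = 1 ∧ μ.map (F f0 f1) = μ

/-- An ergodic `F`-invariant Borel probability measure on `Γ`. -/
def IsErgGamma (f0 f1 : ℝ → ℝ) (d : ℝ) (μ : Measure (Seq2 × ℝ)) : Prop :=
  IsInvGamma f0 f1 d μ ∧ Ergodic (F f0 f1) μ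

/-- A `σ`-invariant Borel probability measure on `Σ`. -/
def IsInvSigma (f0 f1 : ℝ → ℝ) (d : ℝ) (ν : Measure Seq2) : Prop :=
  IsProbabilityMeasure ν ∧ ν (SigmaA f0 f1 d) = 1 ∧ ν.map shift = ν

/-- An ergodic `σ`-invariant Borel probability measure on `Σ`. -/
def IsErgSigma (f0 f1 : ℝ → ℝ) (d : ℝ) (ν : Measure Seq2) : Prop :=
  IsInvSigma f0 f1 d ν ∧ Ergodic shift ν

/-- `f_{[w]} = f_{w_{n-1}} ∘ ⋯ ∘ f_{w_0}` for a finite word `w`. -/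
def fWord (f0 f1 : ℝ → ℝ) : List (Fin 2) → ℝ → ℝ
  | [], x => x
  | i :: w, x => fWord f0 f1 w ((if i = 0 then f0 else f1) x)

/-- The derivative `(f_{[w]})'(x)`. -/
def fWordDeriv (f0 f1 df0 df1 : ℝ → ℝ) : List (Fin 2) → ℝ → ℝ
  | [], _ => 1
  | i :: w, x => (if i = 0 then df0 x else df1 x) *
      fWordDeriv f0 f1 df0 df1 w ((if i = 0 then f0 else f1) x)

/-- The word `w` is (forward) admissible at `x`. -/
def wordAdm (f0 f1 : ℝ → ℝ) (d : ℝ) : List (Fin 2) → ℝ → Prop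
  | [], x => x ∈ Icc (0 : ℝ) 1
  | i :: w, x => x ∈ Icc (0 : ℝ) 1 ∧ (i = 1 → d ≤ x) ∧
      wordAdm f0 f1 d w ((if i = 0 then f0 else f1) x)

/-- The admissibility interval `I_{[w]}`. -/
def IWord (f0 f1 : ℝ → ℝ) (d : ℝ) (w : List (Fin 2)) : Set ℝ := { x | wordAdm f0 f1 d w x }

/-- The point `a_{[w]}`, left endpoint of `I_{[w]} = [a_{[w]}, 1]`. -/
noncomputable def aWord (f0 f1 : ℝ → ℝ) (d : ℝ) (w : List (Fin 2)) : ℝ := sInf (IWord f0 f1 d w)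

/-- The periodic sequence `w^ℤ`. -/
def perSeq (w : List (Fin 2)) : Seq2 := fun n => w.getD (n % (w.length : ℤ)).toNat 0

/-- The finite word `(ξ_a, ξ_{a+1}, …, ξ_{a+n-1})` read off a sequence. -/
def seqWord (ξ : Seq2) (a : ℤ) (n : ℕ) : List (Fin 2) := List.ofFn fun i : Fin n => ξ (a + (i.1 : ℤ))

/-- `X` is a periodic point of `F` in `Γ` with period `n ≥ 1`. -/
def IsPerPt (f0 f1 : ℝ → ℝ) (d : ℝ) (X : Seq2 × ℝ) (n : ℕ) : Prop :=
  X ∈ Gamma f0 f1 d ∧ 1 ≤ n ∧ (F f0 f1)^[n] X = X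

/-- Hyperbolic periodic point (the multiplier is different from 1). -/
def IsHypPerPt (f0 f1 df0 df1 : ℝ → ℝ) (d : ℝ) (X : Seq2 × ℝ) : Prop :=
  ∃ n, IsPerPt f0 f1 d X n ∧ fIterDeriv f0 f1 df0 df1 X.1 n X.2 ≠ 1

/-- Hyperbolic periodic point of expanding type. -/
def IsExpPerPt (f0 f1 df0 df1 : ℝ → ℝ) (d : ℝ) (X : Seq2 × ℝ) : Prop :=
  ∃ n, IsPerPt f0 f1 d X n ∧ 1 < fIterDeriv f0 f1 df0 df1 X.1 n X.2

/-- Hyperbolic periodic point of contracting type. -/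
def IsConPerPt (f0 f1 df0 df1 : ℝ → ℝ) (d : ℝ) (X : Seq2 × ℝ) : Prop :=
  ∃ n, IsPerPt f0 f1 d X n ∧ 0 < fIterDeriv f0 f1 df0 df1 X.1 n X.2 ∧
    fIterDeriv f0 f1 df0 df1 X.1 n X.2 < 1

/-- Parabolic periodic point (multiplier 1). -/
def IsParPerPt (f0 f1 df0 df1 : ℝ → ℝ) (d : ℝ) (X : Seq2 × ℝ) : Prop :=
  ∃ n, IsPerPt f0 f1 d X n ∧ fIterDeriv f0 f1 df0 df1 X.1 n X.2 = 1

/-- The stable set `W^s(R, F)` of a point, for `F : Γ → Γ`. -/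
def Ws (f0 f1 : ℝ → ℝ) (d : ℝ) (R : Seq2 × ℝ) : Set (Seq2 × ℝ) :=
  { X | (∀ k : ℕ, (F f0 f1)^[k] X ∈ Gamma f0 f1 d) ∧
      Tendsto (fun k => (F f0 f1)^[k] X) atTop (nhds R) }

/-- The unstable set `W^u(R, F) = W^s(R, F⁻¹)` of a point, for `F : Γ → Γ`. -/
def Wu (f0 f1 : ℝ → ℝ) (d : ℝ) (R : Seq2 × ℝ) : Set (Seq2 × ℝ) :=
  { X | ∃ Z : ℕ → Seq2 × ℝ, Z 0 = X ∧
      (∀ m : ℕ, Z m ∈ Gamma f0 f1 d ∧ F f0 f1 (Z (m + 1)) = Z m) ∧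
      Tendsto Z atTop (nhds R) }

/-- The stable set of the orbit of `R`. -/
def WsOrbit (f0 f1 : ℝ → ℝ) (d : ℝ) (R : Seq2 × ℝ) : Set (Seq2 × ℝ) :=
  ⋃ j : ℕ, Ws f0 f1 d ((F f0 f1)^[j] R)

/-- The unstable set of the orbit of `R`. -/
def WuOrbit (f0 f1 : ℝ → ℝ) (d : ℝ) (R : Seq2 × ℝ) : Set (Seq2 × ℝ) :=
  ⋃ j : ℕ, Wu f0 f1 d ((F f0 f1)^[j] R)

/-- The homoclinic class `H(R,F)`. -/
def homClass (f0 f1 : ℝ → ℝ) (d : ℝ) (R : Seq2 × ℝ) : Set (Seq2 × ℝ) :=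
  closure (WsOrbit f0 f1 d R ∩ WuOrbit f0 f1 d R)

/-- `R₁` and `R₂` are homoclinically related. -/
def HomRel (f0 f1 : ℝ → ℝ) (d : ℝ) (R₁ R₂ : Seq2 × ℝ) : Prop :=
  (WsOrbit f0 f1 d R₁ ∩ WuOrbit f0 f1 d R₂).Nonempty ∧
  (WuOrbit f0 f1 d R₁ ∩ WsOrbit f0 f1 d R₂).Nonempty

/-- A set is (fiber) hyperbolic of expanding type. -/
def IsHypExpanding (f0 f1 df0 df1 : ℝ → ℝ) (Λ : Set (Seq2 × ℝ)) : Prop :=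
  ∃ C : ℝ, 0 < C ∧ ∃ α : ℝ, 0 < α ∧ ∀ p ∈ Λ, ∀ n : ℕ, 1 ≤ n →
    C * Real.exp (α * n) ≤ fIterDeriv f0 f1 df0 df1 p.1 n p.2

/-- A set is (fiber) hyperbolic of contracting type (backward iterates expand). -/
def IsHypContracting (f0 f1 df0 df1 : ℝ → ℝ) (d : ℝ) (Λ : Set (Seq2 × ℝ)) : Prop :=
  ∃ C : ℝ, 0 < C ∧ ∃ α : ℝ, 0 < α ∧ ∀ p ∈ Λ, ∀ Z : ℕ → Seq2 × ℝ, Z 0 = p →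
    (∀ m : ℕ, Z m ∈ Gamma f0 f1 d ∧ F f0 f1 (Z (m + 1)) = Z m) →
    ∀ n : ℕ, 1 ≤ n → fIterDeriv f0 f1 df0 df1 (Z n).1 n (Z n).2 ≤ C * Real.exp (-(α * n))

/-- The nonwandering set `Ω(Γ, F)` of `F : Γ → Γ`. -/
def nonwandering (f0 f1 : ℝ → ℝ) (d : ℝ) : Set (Seq2 × ℝ) :=
  { X | X ∈ Gamma f0 f1 d ∧ ∀ U : Set (Seq2 × ℝ), IsOpen U → X ∈ U →
      ∃ n : ℕ, 1 ≤ n ∧ ∃ Y ∈ U ∩ Gamma f0 f1 d, (F f0 f1)^[n] Y ∈ U ∩ Gamma f0 f1 d }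

/-- The finite word `w` occurs in the sequence `ξ`. -/
def OccursIn (w : List (Fin 2)) (ξ : Seq2) : Prop :=
  ∃ k : ℤ, ∀ i : ℕ, i < w.length → ξ (k + (i : ℤ)) = w.getD i 0

/-- The set `Σ^het` of heteroclinic admissible sequences. -/
def SigmaHet (f0 f1 : ℝ → ℝ) (d : ℝ) : Set Seq2 :=
  { ξ | ξ ∈ SigmaA f0 f1 d ∧ ∃ k : ℤ, ∃ w : List (Fin 2),
      (∀ m : ℤ, m < k → ξ m = 0) ∧
      (∀ i : ℕ, i < w.length → ξ (k + (i : ℤ)) = w.getD i 0) ∧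
      (∀ m : ℤ, k + (w.length : ℤ) ≤ m → ξ m = 0) ∧
      fWord f0 f1 w 1 = 0 }

/-- `Σ^cod = Σ ∖ Σ^het`. -/
def SigmaCod (f0 f1 : ℝ → ℝ) (d : ℝ) : Set Seq2 := SigmaA f0 f1 d \ SigmaHet f0 f1 d

/-- `Γ^cod = π⁻¹(Σ^cod) ∩ Γ`. -/
def GammaCod (f0 f1 : ℝ → ℝ) (d : ℝ) : Set (Seq2 × ℝ) :=
  { p ∈ Gamma f0 f1 d | p.1 ∈ SigmaCod f0 f1 d }

/-- `Σ^sing`: sequences whose spine is a singleton. -/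
def SigmaSing (f0 f1 : ℝ → ℝ) (d : ℝ) : Set Seq2 :=
  { ξ | ξ ∈ SigmaA f0 f1 d ∧ (Ifiber f0 f1 d ξ).Subsingleton }

/-- `Σ^spine`: sequences whose spine is a nondegenerate interval. -/
def SigmaSpine (f0 f1 : ℝ → ℝ) (d : ℝ) : Set Seq2 :=
  { ξ | ξ ∈ SigmaA f0 f1 d ∧ ¬ (Ifiber f0 f1 d ξ).Subsingleton }

/-- `T` restricted to `S` is topologically transitive. -/
def TransOn {α : Type*} [TopologicalSpace α] (T : α → α) (S : Set α) : Prop :=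
  ∀ U V : Set α, IsOpen U → IsOpen V → (U ∩ S).Nonempty → (V ∩ S).Nonempty →
    ∃ n : ℕ, 1 ≤ n ∧ (T^[n] '' (U ∩ S) ∩ (V ∩ S)).Nonempty

/-- `T` restricted to `S` is topologically mixing. -/
def MixOn {α : Type*} [TopologicalSpace α] (T : α → α) (S : Set α) : Prop :=
  ∀ U V : Set α, IsOpen U → IsOpen V → (U ∩ S).Nonempty → (V ∩ S).Nonempty →
    ∃ N : ℕ, ∀ n : ℕ, N ≤ n → (T^[n] '' (U ∩ S) ∩ (V ∩ S)).Nonempty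

/-- A subshift of finite type: the sequences avoiding a finite list of forbidden words. -/
def IsSFT (S : Set Seq2) : Prop :=
  ∃ Fw : Finset (List (Fin 2)), S = { ξ | ∀ w ∈ Fw, ¬ OccursIn w ξ }

/-- Number of words of length `n` appearing in sequences of `S`. -/
noncomputable def wordCount (S : Set Seq2) (n : ℕ) : ℕ :=
  Nat.card { w : List (Fin 2) // w.length = n ∧ ∃ ξ ∈ S, OccursIn w ξ }

/-- Topological entropy of the shift on a subshift `S`, as exponential growth rate of
the number of words. -/
noncomputable def subshiftEntropy (S : Set Seq2) : ℝ :=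
  Filter.limsup (fun n : ℕ => Real.log (wordCount S n) / n) Filter.atTop

/-- `Λ` is `F`-invariant. -/
def IsInvariantSet (f0 f1 : ℝ → ℝ) (Λ : Set (Seq2 × ℝ)) : Prop := F f0 f1 '' Λ = Λ

/-- `Λ` is locally maximal: it is the set of full orbits inside some neighborhood. -/
def IsLocallyMaximal (f0 f1 : ℝ → ℝ) (Λ : Set (Seq2 × ℝ)) : Prop :=
  ∃ V : Set (Seq2 × ℝ), IsOpen V ∧ Λ ⊆ V ∧
    Λ = { X | ∃ Z : ℤ → Seq2 × ℝ, Z 0 = X ∧ (∀ n : ℤ, Z (n + 1) = F f0 f1 (Z n)) ∧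
      ∀ n : ℤ, Z n ∈ V }

/-- Basic set with uniform fiber expansion. -/
def IsBasicExp (f0 f1 df0 df1 : ℝ → ℝ) (d : ℝ) (Λ : Set (Seq2 × ℝ)) : Prop :=
  Λ ⊆ Gamma f0 f1 d ∧ IsCompact Λ ∧ IsInvariantSet f0 f1 Λ ∧ IsLocallyMaximal f0 f1 Λ ∧
  TransOn (F f0 f1) Λ ∧ IsHypExpanding f0 f1 df0 df1 Λ

/-- Basic set with uniform fiber contraction. -/
def IsBasicCon (f0 f1 df0 df1 : ℝ → ℝ) (d : ℝ) (Λ : Set (Seq2 × ℝ)) : Prop :=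
  Λ ⊆ Gamma f0 f1 d ∧ IsCompact Λ ∧ IsInvariantSet f0 f1 Λ ∧ IsLocallyMaximal f0 f1 Λ ∧
  TransOn (F f0 f1) Λ ∧ IsHypContracting f0 f1 df0 df1 d Λ

/-- The entropy function `𝓗(p) = -p log p - (1-p) log (1-p)`. -/
noncomputable def entH (p : ℝ) : ℝ := -(p * Real.log p) - (1 - p) * Real.log (1 - p)

end DGR

open scoped Topology ENNReal

lemma sub_le_deriv_mul_sub_of_antitoneOn {f f' : ℝ → ℝ} {x y : ℝ}
    (hf : ∀ z ∈ Icc x y, HasDerivAt f (f' z) z) (hf' : AntitoneOn f' (Icc x y)) (hxy : x ≤ y) :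
    f y - f x ≤ f' x * (y - x) := by
  refine (convex_Icc x y).image_sub_le_mul_sub_of_deriv_le
    (fun z hz => (hf z hz).continuousAt.continuousWithinAt)
    (fun z hz => (hf z (interior_subset hz)).differentiableAt.differentiableWithinAt)
    (fun z hz => ?_) x (left_mem_Icc.2 hxy) y (right_mem_Icc.2 hxy) hxy
  rw [interior_Icc] at hz
  rw [(hf z (Ioo_subset_Icc_self hz)).deriv]
  exact hf' (left_mem_Icc.2 hxy) (Ioo_subset_Icc_self hz) hz.1.le

lemma deriv_mul_sub_le_sub_of_antitoneOn {f f' : ℝ → ℝ} {x y : ℝ}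
    (hf : ∀ z ∈ Icc x y, HasDerivAt f (f' z) z) (hf' : AntitoneOn f' (Icc x y)) (hxy : x ≤ y) :
    f' y * (y - x) ≤ f y - f x := by
  refine (convex_Icc x y).mul_sub_le_image_sub_of_le_deriv
    (fun z hz => (hf z hz).continuousAt.continuousWithinAt)
    (fun z hz => (hf z (interior_subset hz)).differentiableAt.differentiableWithinAt)
    (fun z hz => ?_) x (left_mem_Icc.2 hxy) y (right_mem_Icc.2 hxy) hxy
  rw [interior_Icc] at hz
  rw [(hf z (Ioo_subset_Icc_self hz)).deriv]
  exact hf' (Ioo_subset_Icc_self hz) (right_mem_Icc.2 hxy) hz.2.le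

section Coboundary

def clip (M a : ℝ) : ℝ := max (-M) (min M a)

lemma continuous_clip (M : ℝ) : Continuous (clip M) :=
  continuous_const.max (continuous_const.min continuous_id)

lemma abs_clip_le (M a : ℝ) : |clip M a| ≤ |M| := by
  simp only [clip, max_def, min_def, abs_le]
  constructor <;> split_ifs <;> cases abs_cases M <;> linarith

lemma clip_of_abs_le {M a : ℝ} (h : |a| ≤ M) : clip M a = a := by
  rw [clip, min_eq_right (le_of_abs_le h), max_eq_right (neg_le_of_abs_le h)]

lemma clip_sub_clip_le (M a b : ℝ) : clip M b - clip M a ≤ max (b - a) 0 := by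
  simp only [clip, max_def, min_def]
  split_ifs <;> linarith

lemma min_posPart_sub_clip_nonneg {a b f : ℝ} (h : b - a ≤ f) (M : ℝ) :
    0 ≤ min (max f 0 - (clip M b - clip M a)) (max (-f) 0) :=
  le_min (by linarith [clip_sub_clip_le M a b, max_le_max_right 0 h]) (le_max_right _ _)

lemma eventually_min_posPart_sub_clip_eq {a b f : ℝ} (h : b - a ≤ f) :
    ∀ᶠ M : ℕ in atTop, min (max f 0 - (clip M b - clip M a)) (max (-f) 0) = max (-f) 0 := by
  filter_upwards [eventually_ge_atTop ⌈max |a| |b|⌉₊] with M hM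
  have hM' := (Nat.le_ceil _).trans (Nat.cast_le.2 hM)
  rw [clip_of_abs_le ((le_max_left _ _).trans hM'), clip_of_abs_le ((le_max_right _ _).trans hM')]
  refine min_eq_right ?_
  rcases le_total 0 f with hf | hf
  · rw [max_eq_left hf, max_eq_right (by linarith)]; linarith
  · rw [max_eq_right hf, max_eq_left (by linarith)]; linarith

variable {α : Type*} [MeasurableSpace α] {μ : Measure α} {T : α → α}

lemma MeasureTheory.MeasurePreserving.integral_comp_of_measurable
    (hT : MeasurePreserving T μ μ) {g : α → ℝ} (hg : Measurable g) :
    ∫ x, g (T x) ∂μ = ∫ x, g x ∂μ := by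
  rw [← integral_map hT.aemeasurable (hT.map_eq ▸ hg.aestronglyMeasurable), hT.map_eq]

lemma integrable_clip_comp [IsFiniteMeasure μ] {G : α → ℝ} (hG : Measurable G) (M : ℝ) :
    Integrable (fun x => clip M (G x)) μ :=
  .of_bound ((continuous_clip M).measurable.comp hG).aestronglyMeasurable |M|
    (.of_forall fun x => abs_clip_le M (G x))

lemma integrable_clip_coboundary [IsFiniteMeasure μ] (hT : MeasurePreserving T μ μ)
    {G : α → ℝ} (hG : Measurable G) (M : ℝ) :
    Integrable (fun x => clip M (G (T x)) - clip M (G x)) μ :=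
  (integrable_clip_comp (G := fun x => G (T x)) (hG.comp hT.measurable) M).sub
    (integrable_clip_comp hG M)

lemma integral_clip_coboundary [IsFiniteMeasure μ] (hT : MeasurePreserving T μ μ)
    {G : α → ℝ} (hG : Measurable G) (M : ℝ) :
    ∫ x, (clip M (G (T x)) - clip M (G x)) ∂μ = 0 := by
  rw [integral_sub (integrable_clip_comp (G := fun x => G (T x)) (hG.comp hT.measurable) M)
    (integrable_clip_comp hG M),
    hT.integral_comp_of_measurable (g := fun x => clip M (G x))
      ((continuous_clip M).measurable.comp hG), sub_self]

/-- `G` need not be integrable, so `∫ (G ∘ T - G) = 0` is not available. The truncated coboundaries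
`D_M = clip M ∘ G ∘ T - clip M ∘ G` do have integral zero, satisfy `D_M ≤ F⁺`, and equal
`G ∘ T - G` for large `M`; dominated convergence for `min (F⁺ - D_M) F⁻ → F⁻` gives
`∫ F⁻ ≤ ∫ F⁺`. -/
theorem integral_nonneg_of_le_coboundary [IsFiniteMeasure μ] (hT : MeasurePreserving T μ μ)
    {F G : α → ℝ} (hF : Integrable F μ) (hG : Measurable G)
    (hGF : ∀ᵐ x ∂μ, G (T x) - G x ≤ F x) : 0 ≤ ∫ x, F x ∂μ := by
  set k : ℕ → α → ℝ := fun M x =>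
    min (max (F x) 0 - (clip M (G (T x)) - clip M (G x))) (max (-F x) 0)
  have hk_le : ∀ M, ∫ x, k M x ∂μ ≤ ∫ x, max (F x) 0 ∂μ := fun M => calc
    ∫ x, k M x ∂μ ≤ ∫ x, (max (F x) 0 - (clip M (G (T x)) - clip M (G x))) ∂μ :=
      integral_mono_of_nonneg (hGF.mono fun x hx => min_posPart_sub_clip_nonneg hx M)
        (hF.pos_part.sub (integrable_clip_coboundary hT hG M))
        (.of_forall fun x => min_le_left _ _)
    _ = ∫ x, max (F x) 0 ∂μ := by
      rw [integral_sub hF.pos_part (integrable_clip_coboundary hT hG M),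
        integral_clip_coboundary hT hG, sub_zero]
  have hk_lim := tendsto_integral_of_dominated_convergence (F := k) (fun x => max (-F x) 0)
    (fun M => (hF.pos_part.sub (integrable_clip_coboundary hT hG M)).aestronglyMeasurable.inf
      hF.neg.pos_part.aestronglyMeasurable) hF.neg.pos_part
    (fun M => hGF.mono fun x hx => by
      rw [Real.norm_eq_abs, abs_of_nonneg (min_posPart_sub_clip_nonneg hx M)]
      exact min_le_right _ _)
    (hGF.mono fun x hx => tendsto_const_nhds.congr'
      ((eventually_min_posPart_sub_clip_eq hx).mono fun _ hM => hM.symm))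
  have hsplit := integral_eq_integral_pos_part_sub_integral_neg_part hF
  simp only [Real.coe_toNNReal'] at hsplit
  linarith [le_of_tendsto' hk_lim hk_le]

theorem integral_nonneg_of_tendsto_of_le_coboundary [IsFiniteMeasure μ]
    (hT : MeasurePreserving T μ μ) {L : ℕ → α → ℝ} {L' : α → ℝ} {C : ℝ}
    (hLm : ∀ n, AEStronglyMeasurable (L n) μ) (hLC : ∀ n, ∀ᵐ x ∂μ, |L n x| ≤ C)
    (hlim : ∀ᵐ x ∂μ, Tendsto (fun n => L n x) atTop (𝓝 (L' x)))
    (hcob : ∀ n, ∃ G : α → ℝ, Measurable G ∧ ∀ᵐ x ∂μ, G (T x) - G x ≤ L n x) :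
    0 ≤ ∫ x, L' x ∂μ := by
  refine ge_of_tendsto' (tendsto_integral_of_dominated_convergence (fun _ => C) hLm
    (integrable_const C) (fun n => (hLC n).mono fun x hx => by rwa [Real.norm_eq_abs]) hlim)
    fun n => ?_
  obtain ⟨G, hG, hGL⟩ := hcob n
  exact integral_nonneg_of_le_coboundary hT (.of_bound (hLm n) C
    ((hLC n).mono fun x hx => by rwa [Real.norm_eq_abs])) hG hGL

end Coboundary

section Invariant

variable {α β : Type*} [MeasurableSpace α] [MeasurableSpace β] {μ : Measure α} {T : α → α}

theorem Ergodic.map_of_ae_semiconj {S : β → β} {g : α → β} (hT : Ergodic T μ)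
    (hg : Measurable g) (hS : Measurable S) (h : ∀ᵐ x ∂μ, S (g x) = g (T x)) :
    Ergodic S (μ.map g) := by
  have hgμ : MeasurePreserving g μ (μ.map g) := ⟨hg, rfl⟩
  refine ⟨⟨hS, ?_⟩, ⟨fun s hs hSs => ?_⟩⟩
  · rw [Measure.map_map hS hg, Measure.map_congr (f := S ∘ g) (g := g ∘ T) h,
      ← Measure.map_map hg hT.measurable, hT.map_eq]
  · rw [← hgμ.aeconst_preimage hs.nullMeasurableSet]
    refine hT.quasiErgodic.aeconst_set₀ (hg hs).nullMeasurableSet ?_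
    filter_upwards [h] with x hx
    change (g (T x) ∈ s) = (g x ∈ s)
    rw [← hx, ← mem_preimage (f := S), hSs]

theorem measure_iUnion_eq_zero_of_preimage_eq [IsFiniteMeasure μ]
    (hT : MeasurePreserving T μ μ) {Z : ℤ → Set α} (hZ : ∀ a, MeasurableSet (Z a))
    (hdir : Directed (· ⊇ ·) Z) (hpre : ∀ a, T ⁻¹' Z a = Z (a + 1)) (h : μ (⋂ a, Z a) = 0) :
    μ (⋃ a, Z a) = 0 := by
  have hconst : ∀ a, μ (Z a) = μ (Z 0) := fun a => by
    induction a using Int.induction_on with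
    | zero => rfl
    | succ a ih => rw [← hpre, hT.measure_preimage (hZ a).nullMeasurableSet, ih]
    | pred a ih =>
      rw [← ih, ← hT.measure_preimage (hZ _).nullMeasurableSet, hpre, sub_add_cancel]
  have h0 : μ (Z 0) = 0 := by
    rw [← h, hdir.measure_iInter (fun a => (hZ a).nullMeasurableSet) ⟨0, measure_ne_top μ _⟩]
    simp only [hconst, iInf_const]
  exact measure_iUnion_null fun a => (hconst a).trans h0

lemma integral_of_ae_eq_point [IsProbabilityMeasure μ] {a : α} (h : ∀ᵐ x ∂μ, x = a)
    (f : α → ℝ) : ∫ x, f x ∂μ = f a := by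
  rw [integral_congr_ae (h.mono fun x hx => congrArg f hx), integral_const, probReal_univ,
    one_smul]

end Invariant
namespace DGR

variable {f0 f1 df0 df1 : ℝ → ℝ} {d : ℝ}

/-- `fIter`, `fWord`, `wordAdm` and `lyap` spell the fiber map `f_i` out as
`if i = 0 then f0 else f1`; this is that function. -/
def fiber (f0 f1 : ℝ → ℝ) (i : Fin 2) : ℝ → ℝ := if i = 0 then f0 else f1

/-- `f_i` is defined on `[leftEnd d i, 1]` and maps `leftEnd d i` to `0`. -/
def leftEnd (d : ℝ) (i : Fin 2) : ℝ := if i = 0 then 0 else d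

lemma fin_two_cases (i : Fin 2) : i = 0 ∨ i = 1 := by omega

@[simp] lemma fiber_zero : fiber f0 f1 0 = f0 := rfl

@[simp] lemma fiber_one : fiber f0 f1 1 = f1 := rfl

@[simp] lemma leftEnd_zero : leftEnd d 0 = 0 := rfl

@[simp] lemma leftEnd_one : leftEnd d 1 = d := rfl

namespace H1

variable (h : H1 f0 f1 df0 df1 d)
include h

lemma f0_zero : f0 0 = 0 := by
  obtain ⟨y, hy, hfy⟩ := h.surj0 (left_mem_Icc.2 zero_le_one)
  linarith [h.mono0.monotone hy.1, (h.maps0 (left_mem_Icc.2 zero_le_one)).1]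

lemma f0_one : f0 1 = 1 := by
  obtain ⟨y, hy, hfy⟩ := h.surj0 (right_mem_Icc.2 zero_le_one)
  linarith [h.mono0.monotone hy.2, (h.maps0 (right_mem_Icc.2 zero_le_one)).2]

lemma strictMono_fiber (i : Fin 2) : StrictMono (fiber f0 f1 i) := by
  rcases fin_two_cases i with rfl | rfl
  exacts [h.mono0, h.mono1]

lemma hasDerivAt_fiber (i : Fin 2) (x : ℝ) : HasDerivAt (fiber f0 f1 i) (fiber df0 df1 i x) x := by
  rcases fin_two_cases i with rfl | rfl
  exacts [h.hasDeriv0 x, h.hasDeriv1 x]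

lemma continuous_fiber (i : Fin 2) : Continuous (fiber f0 f1 i) :=
  continuous_iff_continuousAt.2 fun x => (h.hasDerivAt_fiber i x).continuousAt

lemma measurable_fiber_deriv (i : Fin 2) : Measurable (fiber df0 df1 i) := by
  rw [show fiber df0 df1 i = deriv (fiber f0 f1 i) from
    funext fun x => (h.hasDerivAt_fiber i x).deriv.symm]
  exact measurable_deriv _

lemma continuousOn_fiber_deriv (i : Fin 2) :
    ContinuousOn (fiber df0 df1 i) (Icc (leftEnd d i) 1) := by
  rcases fin_two_cases i with rfl | rfl
  exacts [h.contDeriv0, h.contDeriv1]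

lemma leftEnd_le_one (i : Fin 2) : leftEnd d i ≤ 1 := by
  rcases fin_two_cases i with rfl | rfl
  exacts [zero_le_one, h.d_mem.2.le]

lemma eq_zero_of_leftEnd_nonpos {i : Fin 2} (hi : leftEnd d i ≤ 0) : i = 0 := by
  rcases fin_two_cases i with rfl | rfl
  · rfl
  · exact absurd hi (not_le.2 h.d_mem.1)

lemma fiber_leftEnd (i : Fin 2) : fiber f0 f1 i (leftEnd d i) = 0 := by
  rcases fin_two_cases i with rfl | rfl
  exacts [h.f0_zero, h.f1_d]

lemma fiber_one_le (i : Fin 2) : fiber f0 f1 i 1 ≤ 1 := by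
  rcases fin_two_cases i with rfl | rfl
  exacts [h.f0_one.le, (h.f1_below 1 ⟨h.d_mem.2.le, le_rfl⟩).le]

lemma eq_zero_of_fiber_one_eq {i : Fin 2} (hi : fiber f0 f1 i 1 = 1) : i = 0 := by
  rcases fin_two_cases i with rfl | rfl
  · rfl
  · exact absurd hi (h.f1_below 1 ⟨h.d_mem.2.le, le_rfl⟩).ne

lemma mem_Icc_leftEnd_iff {i : Fin 2} {x : ℝ} :
    x ∈ Icc (leftEnd d i) 1 ↔ x ∈ Icc (0 : ℝ) 1 ∧ (i = 1 → d ≤ x) := by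
  rcases fin_two_cases i with rfl | rfl
  · simp
  · simp only [leftEnd_one, mem_Icc, forall_const]
    exact ⟨fun hx => ⟨⟨h.d_mem.1.le.trans hx.1, hx.2⟩, hx.1⟩, fun hx => ⟨hx.2, hx.1.2⟩⟩

lemma surjOn_fiber (i : Fin 2) :
    SurjOn (fiber f0 f1 i) (Icc (leftEnd d i) 1) (Icc 0 (fiber f0 f1 i 1)) := by
  have := intermediate_value_Icc (h.leftEnd_le_one i) (h.continuous_fiber i).continuousOn
  rwa [h.fiber_leftEnd i] at this

end H1

section H2

variable (h1 : H1 f0 f1 df0 df1 d) (h2 : H2 df0 df1 d)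
include h2

lemma antitoneOn_fiber_deriv (i : Fin 2) :
    AntitoneOn (fiber df0 df1 i) (Icc (leftEnd d i) 1) := by
  rcases fin_two_cases i with rfl | rfl
  exacts [h2.1.antitoneOn, h2.2]

include h1

lemma fiber_deriv_pos {i : Fin 2} {x : ℝ} (hx : x ∈ Icc (leftEnd d i) 1) :
    0 < fiber df0 df1 i x := by
  refine lt_of_lt_of_le ?_ (antitoneOn_fiber_deriv h2 i hx
    (right_mem_Icc.2 (h1.leftEnd_le_one i)) hx.2)
  rcases fin_two_cases i with rfl | rfl
  exacts [h1.deriv0_one.1, h1.deriv1_one]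

lemma abs_log_fiber_deriv_le {i : Fin 2} {x : ℝ} (hx : x ∈ Icc (leftEnd d i) 1) :
    |Real.log (fiber df0 df1 i x)| ≤
      max |Real.log (fiber df0 df1 i 1)| |Real.log (fiber df0 df1 i (leftEnd d i))| := by
  have hanti := antitoneOn_fiber_deriv h2 i
  have hl := left_mem_Icc.2 (h1.leftEnd_le_one i)
  have hr := right_mem_Icc.2 (h1.leftEnd_le_one i)
  exact abs_le_max_abs_abs (Real.log_le_log (fiber_deriv_pos h1 h2 hr) (hanti hx hr hx.2))
    (Real.log_le_log (fiber_deriv_pos h1 h2 hx) (hanti hl hx hx.1))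

lemma exists_abs_log_fiber_deriv_le :
    ∃ C, ∀ i : Fin 2, ∀ x ∈ Icc (leftEnd d i) 1, |Real.log (fiber df0 df1 i x)| ≤ C := by
  set B : Fin 2 → ℝ := fun i =>
    max |Real.log (fiber df0 df1 i 1)| |Real.log (fiber df0 df1 i (leftEnd d i))|
  refine ⟨max (B 0) (B 1), fun i x hx => (abs_log_fiber_deriv_le h1 h2 hx).trans ?_⟩
  rcases fin_two_cases i with rfl | rfl
  exacts [le_max_left _ _, le_max_right _ _]

lemma fiber_sub_le {i : Fin 2} {x y : ℝ} (hx : leftEnd d i ≤ x) (hxy : x ≤ y) (hy : y ≤ 1) :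
    fiber f0 f1 i y - fiber f0 f1 i x ≤ fiber df0 df1 i x * (y - x) :=
  sub_le_deriv_mul_sub_of_antitoneOn (fun z _ => h1.hasDerivAt_fiber i z)
    ((antitoneOn_fiber_deriv h2 i).mono (Icc_subset_Icc hx hy)) hxy

lemma le_fiber_sub {i : Fin 2} {x y : ℝ} (hx : leftEnd d i ≤ x) (hxy : x ≤ y) (hy : y ≤ 1) :
    fiber df0 df1 i y * (y - x) ≤ fiber f0 f1 i y - fiber f0 f1 i x :=
  deriv_mul_sub_le_sub_of_antitoneOn (fun z _ => h1.hasDerivAt_fiber i z)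
    ((antitoneOn_fiber_deriv h2 i).mono (Icc_subset_Icc hx hy)) hxy

end H2

lemma fWord_cons (i : Fin 2) (w : List (Fin 2)) (x : ℝ) :
    fWord f0 f1 (i :: w) x = fWord f0 f1 w (fiber f0 f1 i x) := rfl

lemma fWord_append (w v : List (Fin 2)) (x : ℝ) :
    fWord f0 f1 (w ++ v) x = fWord f0 f1 v (fWord f0 f1 w x) := by
  induction w generalizing x with
  | nil => rfl
  | cons i w ih => exact ih _

lemma H1.strictMono_fWord (h : H1 f0 f1 df0 df1 d) (w : List (Fin 2)) :
    StrictMono (fWord f0 f1 w) := by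
  induction w with
  | nil => exact strictMono_id
  | cons i w ih => exact ih.comp (h.strictMono_fiber i)

lemma wordAdm.mem_Icc {w : List (Fin 2)} {x : ℝ} (hw : wordAdm f0 f1 d w x) :
    x ∈ Icc (0 : ℝ) 1 := by
  cases w with
  | nil => exact hw
  | cons i w => exact hw.1

lemma H1.wordAdm_cons_iff (h : H1 f0 f1 df0 df1 d) {i : Fin 2} {w : List (Fin 2)} {x : ℝ} :
    wordAdm f0 f1 d (i :: w) x ↔
      x ∈ Icc (leftEnd d i) 1 ∧ wordAdm f0 f1 d w (fiber f0 f1 i x) := by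
  rw [h.mem_Icc_leftEnd_iff, and_assoc]
  rfl

lemma wordAdm_append {w v : List (Fin 2)} {x : ℝ} :
    wordAdm f0 f1 d (w ++ v) x ↔ wordAdm f0 f1 d w x ∧ wordAdm f0 f1 d v (fWord f0 f1 w x) := by
  induction w generalizing x with
  | nil => exact ⟨fun hv => ⟨hv.mem_Icc, hv⟩, And.right⟩
  | cons i w ih =>
    change (_ ∧ _ ∧ wordAdm f0 f1 d (w ++ v) _) ↔ (_ ∧ _ ∧ _) ∧ _
    rw [ih]
    tauto

lemma H1.isClosed_IWord (h : H1 f0 f1 df0 df1 d) (w : List (Fin 2)) :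
    IsClosed (IWord f0 f1 d w) := by
  induction w with
  | nil => exact isClosed_Icc
  | cons i w ih =>
    have : IWord f0 f1 d (i :: w) = Icc (leftEnd d i) 1 ∩ fiber f0 f1 i ⁻¹' IWord f0 f1 d w :=
      ext fun x => h.wordAdm_cons_iff
    rw [this]
    exact isClosed_Icc.inter (ih.preimage (h.continuous_fiber i))

lemma bddBelow_IWord (w : List (Fin 2)) : BddBelow (IWord f0 f1 d w) :=
  ⟨0, fun _ hx => (wordAdm.mem_Icc hx).1⟩

lemma aWord_le {w : List (Fin 2)} {x : ℝ} (hx : x ∈ IWord f0 f1 d w) : aWord f0 f1 d w ≤ x :=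
  csInf_le (bddBelow_IWord w) hx

lemma H1.aWord_mem (h : H1 f0 f1 df0 df1 d) {w : List (Fin 2)}
    (hne : (IWord f0 f1 d w).Nonempty) : aWord f0 f1 d w ∈ IWord f0 f1 d w :=
  (h.isClosed_IWord w).csInf_mem hne (bddBelow_IWord w)

lemma aWord_nil : aWord f0 f1 d [] = 0 := csInf_Icc zero_le_one

/-- For `i = 1` this needs `f₁([d, 1]) = [0, f₁ 1]`, which reaches every point left of an
admissible image. -/
lemma H1.fiber_aWord_cons (h : H1 f0 f1 df0 df1 d) {i : Fin 2} {w : List (Fin 2)}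
    (hne : (IWord f0 f1 d (i :: w)).Nonempty) :
    fiber f0 f1 i (aWord f0 f1 d (i :: w)) = aWord f0 f1 d w := by
  have ha := h.wordAdm_cons_iff.1 (h.aWord_mem hne)
  refine le_antisymm ?_ (aWord_le ha.2)
  obtain ⟨x, hx⟩ := hne
  have hx' := h.wordAdm_cons_iff.1 hx
  have hw := h.aWord_mem ⟨_, hx'.2⟩
  obtain ⟨y, hy, hfy⟩ := h.surjOn_fiber i
    ⟨(wordAdm.mem_Icc hw).1, (aWord_le hx'.2).trans ((h.strictMono_fiber i).monotone hx'.1.2)⟩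
  rw [← hfy]
  exact (h.strictMono_fiber i).monotone (aWord_le (h.wordAdm_cons_iff.2 ⟨hy, hfy ▸ hw⟩))

lemma H1.wordAdm_zero_iff (h : H1 f0 f1 df0 df1 d) {w : List (Fin 2)} :
    wordAdm f0 f1 d w 0 ↔ ∀ i ∈ w, i = 0 := by
  induction w with
  | nil => simp [wordAdm]
  | cons i w ih =>
    rw [h.wordAdm_cons_iff, List.forall_mem_cons]
    constructor
    · rintro ⟨h0, hw⟩
      obtain rfl := h.eq_zero_of_leftEnd_nonpos h0.1
      rw [fiber_zero, h.f0_zero] at hw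
      exact ⟨rfl, ih.1 hw⟩
    · rintro ⟨rfl, hw⟩
      rw [fiber_zero, h.f0_zero]
      exact ⟨⟨le_rfl, zero_le_one⟩, ih.2 hw⟩

lemma H1.fWord_one_of_forall_eq_zero (h : H1 f0 f1 df0 df1 d) {w : List (Fin 2)}
    (hw : ∀ i ∈ w, i = 0) : fWord f0 f1 w 1 = 1 := by
  induction w with
  | nil => rfl
  | cons i w ih =>
    rw [List.forall_mem_cons] at hw
    rw [fWord_cons, hw.1, fiber_zero, h.f0_one, ih hw.2]

lemma seqWord_add (ξ : Seq2) (a : ℤ) (m n : ℕ) :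
    seqWord ξ a (m + n) = seqWord ξ a m ++ seqWord ξ (a + m) n := by
  simp only [seqWord, List.ofFn_add]
  congr 1
  ext i
  simp [add_assoc]

lemma seqWord_succ (ξ : Seq2) (a : ℤ) (n : ℕ) :
    seqWord ξ a (n + 1) = ξ a :: seqWord ξ (a + 1) n := by
  rw [add_comm n, seqWord_add]
  simp [seqWord]

lemma seqWord_one (ξ : Seq2) (a : ℤ) : seqWord ξ a 1 = [ξ a] := by
  simp [seqWord]

lemma seqWord_shift (ξ : Seq2) (a : ℤ) (n : ℕ) : seqWord (shift ξ) a n = seqWord ξ (a + 1) n := by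
  simp only [seqWord, shift, add_right_comm]

lemma fIter_eq_fWord (ξ : Seq2) (n : ℕ) (x : ℝ) :
    fIter f0 f1 ξ n x = fWord f0 f1 (seqWord ξ 0 n) x := by
  induction n with
  | zero => rfl
  | succ n ih =>
    rw [seqWord_add, fWord_append, ← ih]
    simp [fIter, seqWord, fWord]

lemma measurable_comp_seqWord {β : Type*} [MeasurableSpace β] (g : List (Fin 2) → β)
    (a : ℤ) (n : ℕ) : Measurable fun ξ : Seq2 => g (seqWord ξ a n) :=
  (measurable_of_countable fun v : Fin n → Fin 2 => g (List.ofFn v)).comp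
    (measurable_pi_lambda _ fun _ => measurable_pi_apply _)

lemma mem_seqWord_zeroSeq {a : ℤ} {n : ℕ} : ∀ i ∈ seqWord zeroSeq a n, i = 0 := by
  simp [seqWord, zeroSeq]

def unshift (ξ : Seq2) : Seq2 := fun n => ξ (n - 1)

lemma shift_unshift (ξ : Seq2) : shift (unshift ξ) = ξ := by
  ext n
  simp [shift, unshift]

lemma iterate_shift_apply (ξ : Seq2) (n : ℕ) (j : ℤ) : shift^[n] ξ j = ξ (j + n) := by
  induction n generalizing ξ with
  | zero => simp
  | succ n ih => rw [Function.iterate_succ_apply, ih]; simp [shift, add_assoc]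

lemma iterate_unshift_apply (ξ : Seq2) (n : ℕ) (j : ℤ) : unshift^[n] ξ j = ξ (j - n) := by
  induction n generalizing ξ with
  | zero => simp
  | succ n ih => rw [Function.iterate_succ_apply, ih]; simp [unshift, sub_sub]

lemma measurable_shift : Measurable shift :=
  measurable_pi_lambda _ fun n => measurable_pi_apply (n + 1)

lemma measurableSet_symbol_eq (j : ℤ) (i : Fin 2) : MeasurableSet {ξ : Seq2 | ξ j = i} :=
  measurableSet_eq_fun (measurable_pi_apply j) measurable_const

/-- A measurable stand-in for `Σ = π(Γ)`, whose measurability is not evident; it contains `Σ`. -/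
def SigmaLoc (f0 f1 : ℝ → ℝ) (d : ℝ) : Set Seq2 :=
  {ξ | ∀ (a : ℤ) (n : ℕ), (IWord f0 f1 d (seqWord ξ a n)).Nonempty}

lemma shift_mem_SigmaLoc {ξ : Seq2} (hξ : ξ ∈ SigmaLoc f0 f1 d) : shift ξ ∈ SigmaLoc f0 f1 d :=
  fun a n => seqWord_shift ξ a n ▸ hξ (a + 1) n

lemma iterate_shift_mem_SigmaLoc {ξ : Seq2} (hξ : ξ ∈ SigmaLoc f0 f1 d) (n : ℕ) :
    shift^[n] ξ ∈ SigmaLoc f0 f1 d := by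
  induction n with
  | zero => exact hξ
  | succ n ih => exact Function.iterate_succ_apply' shift n ξ ▸ shift_mem_SigmaLoc ih

lemma unshift_mem_SigmaLoc {ξ : Seq2} (hξ : ξ ∈ SigmaLoc f0 f1 d) :
    unshift ξ ∈ SigmaLoc f0 f1 d := by
  intro a n
  convert hξ (a - 1) n using 2
  simp only [seqWord, unshift, sub_add_eq_add_sub]

lemma iterate_unshift_mem_SigmaLoc {ξ : Seq2} (hξ : ξ ∈ SigmaLoc f0 f1 d) (n : ℕ) :
    unshift^[n] ξ ∈ SigmaLoc f0 f1 d := by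
  induction n with
  | zero => exact hξ
  | succ n ih => exact Function.iterate_succ_apply' unshift n ξ ▸ unshift_mem_SigmaLoc ih

lemma measurableSet_SigmaLoc : MeasurableSet (SigmaLoc f0 f1 d) := by
  have : SigmaLoc f0 f1 d = ⋂ (a : ℤ) (n : ℕ), {ξ | (IWord f0 f1 d (seqWord ξ a n)).Nonempty} := by
    ext ξ
    simp [SigmaLoc]
  rw [this]
  exact .iInter fun a => .iInter fun n =>
    measurableSet_setOfPred.2 (measurable_comp_seqWord (fun w => (IWord f0 f1 d w).Nonempty) a n)

lemma wordAdm_seqWord_of_forwardAdmissible {ξ : Seq2} {x : ℝ}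
    (hx : forwardAdmissible f0 f1 d ξ x) (n : ℕ) : wordAdm f0 f1 d (seqWord ξ 0 n) x := by
  induction n with
  | zero => exact (hx 0).1
  | succ n ih =>
    rw [seqWord_add, wordAdm_append, ← fIter_eq_fWord, zero_add, seqWord_one]
    exact ⟨ih, (hx n).1, (hx n).2, (hx (n + 1)).1⟩

lemma wordAdm_seqWord_of_backward {ξ : Seq2} {x : ℝ} {y : ℕ → ℝ}
    (hx : forwardAdmissible f0 f1 d ξ x) (hy0 : y 0 = x)
    (hy : ∀ m : ℕ, y m ∈ Icc (0 : ℝ) 1 ∧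
      (ξ (-(m : ℤ) - 1) = 0 → f0 (y (m + 1)) = y m) ∧
      (ξ (-(m : ℤ) - 1) = 1 → d ≤ y (m + 1) ∧ f1 (y (m + 1)) = y m)) (k n : ℕ) :
    wordAdm f0 f1 d (seqWord ξ (-k) n) (y k) := by
  induction k generalizing n with
  | zero => simpa [hy0] using wordAdm_seqWord_of_forwardAdmissible hx n
  | succ k ih =>
    cases n with
    | zero => exact (hy (k + 1)).1
    | succ n =>
      have hstep : fiber f0 f1 (ξ (-(k : ℤ) - 1)) (y (k + 1)) = y k := by
        rcases fin_two_cases (ξ (-(k : ℤ) - 1)) with h | h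
        · rw [h, fiber_zero, (hy k).2.1 h]
        · rw [h, fiber_one, ((hy k).2.2 h).2]
      rw [seqWord_succ, show -((k + 1 : ℕ) : ℤ) = -(k : ℤ) - 1 by push_cast; ring,
        sub_add_cancel]
      have hadm := ih n
      rw [← hstep] at hadm
      exact ⟨(hy (k + 1)).1, fun h => ((hy k).2.2 h).1, hadm⟩

lemma SigmaA_subset_SigmaLoc : SigmaA f0 f1 d ⊆ SigmaLoc f0 f1 d := by
  rintro ξ ⟨⟨ξ, x⟩, ⟨hx, y, hy0, hy⟩, rfl⟩ a n
  obtain ⟨k, p, hkp⟩ : ∃ k p : ℕ, -(k : ℤ) + p = a := ⟨a.natAbs, (a + a.natAbs).toNat, by omega⟩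
  have := wordAdm_seqWord_of_backward hx hy0 hy k (p + n)
  rw [seqWord_add, wordAdm_append, hkp] at this
  exact ⟨_, this.2⟩

lemma ae_mem_SigmaLoc {ν : Measure Seq2} [IsProbabilityMeasure ν]
    (hν : ν (SigmaA f0 f1 d) = 1) : ∀ᵐ ξ ∂ν, ξ ∈ SigmaLoc f0 f1 d :=
  ae_iff.2 <| (prob_compl_eq_zero_iff measurableSet_SigmaLoc).2 <|
    le_antisymm prob_le_one (hν ▸ measure_mono SigmaA_subset_SigmaLoc)

section Equivariant

variable {g : Seq2 → ℝ}
  (hg : ∀ ξ ∈ SigmaLoc f0 f1 d, fiber f0 f1 (ξ 0) (g ξ) = g (shift ξ))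
include hg

lemma fWord_seqWord_of_equivariant {ξ : Seq2} (hξ : ξ ∈ SigmaLoc f0 f1 d) (n : ℕ) :
    fWord f0 f1 (seqWord ξ 0 n) (g ξ) = g (shift^[n] ξ) := by
  induction n generalizing ξ with
  | zero => rfl
  | succ n ih =>
    rw [seqWord_succ, fWord_cons, hg ξ hξ, ← seqWord_shift, ih (shift_mem_SigmaLoc hξ),
      Function.iterate_succ_apply]

lemma H1.mem_Gamma_of_equivariant (h : H1 f0 f1 df0 df1 d)
    (hdom : ∀ ξ ∈ SigmaLoc f0 f1 d, g ξ ∈ Icc (leftEnd d (ξ 0)) 1)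
    {ξ : Seq2} (hξ : ξ ∈ SigmaLoc f0 f1 d) : (ξ, g ξ) ∈ Gamma f0 f1 d := by
  refine ⟨fun n => ?_, fun m => g (unshift^[m] ξ), rfl, fun m => ?_⟩
  · rw [fIter_eq_fWord, fWord_seqWord_of_equivariant hg hξ n]
    simpa [iterate_shift_apply] using
      h.mem_Icc_leftEnd_iff.1 (hdom _ (iterate_shift_mem_SigmaLoc hξ n))
  · set η := unshift^[m] ξ
    have hη := unshift_mem_SigmaLoc (iterate_unshift_mem_SigmaLoc hξ m)
    have hsymb : unshift η 0 = ξ (-(m : ℤ) - 1) := by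
      simp only [η, unshift, iterate_unshift_apply]
      ring_nf
    have heq := hg _ hη
    have hdom' := h.mem_Icc_leftEnd_iff.1 (hdom _ hη)
    rw [shift_unshift, hsymb] at heq
    rw [hsymb] at hdom'
    dsimp only
    rw [Function.iterate_succ_apply']
    refine ⟨(h.mem_Icc_leftEnd_iff.1 (hdom η (iterate_unshift_mem_SigmaLoc hξ m))).1,
      fun h0 => ?_, fun h1 => ⟨hdom'.2 h1, ?_⟩⟩
    · rwa [h0, fiber_zero] at heq
    · rwa [h1, fiber_one] at heq

end Equivariant

section ZeroSets

def zeroFrom (a : ℤ) : Set Seq2 := {ξ | ∀ j, a ≤ j → ξ j = 0}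

def zeroBefore (a : ℤ) : Set Seq2 := {ξ | ∀ j, j < a → ξ j = 0}

lemma measurableSet_zeroFrom (a : ℤ) : MeasurableSet (zeroFrom a) := by
  have : zeroFrom a = ⋂ (j : ℤ) (_ : a ≤ j), {ξ : Seq2 | ξ j = 0} := by
    ext
    simp [zeroFrom]
  rw [this]
  exact .iInter fun j => .iInter fun _ => measurableSet_symbol_eq j 0

lemma measurableSet_zeroBefore (a : ℤ) : MeasurableSet (zeroBefore a) := by
  have : zeroBefore a = ⋂ (j : ℤ) (_ : j < a), {ξ : Seq2 | ξ j = 0} := by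
    ext
    simp [zeroBefore]
  rw [this]
  exact .iInter fun j => .iInter fun _ => measurableSet_symbol_eq j 0

lemma monotone_zeroFrom : Monotone zeroFrom := fun _ _ hab _ hξ j hj => hξ j (hab.trans hj)

lemma antitone_zeroBefore : Antitone zeroBefore := fun _ _ hab _ hξ j hj => hξ j (hj.trans_le hab)

lemma shift_preimage_zeroFrom (a : ℤ) : shift ⁻¹' zeroFrom a = zeroFrom (a + 1) := by
  ext ξ
  refine ⟨fun h j hj => ?_, fun h j hj => h (j + 1) (by omega)⟩
  simpa [shift] using h (j - 1) (by omega)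

lemma shift_preimage_zeroBefore (a : ℤ) : shift ⁻¹' zeroBefore a = zeroBefore (a + 1) := by
  ext ξ
  refine ⟨fun h j hj => ?_, fun h j hj => h (j + 1) (by omega)⟩
  simpa [shift] using h (j - 1) (by omega)

lemma iInter_zeroFrom : ⋂ a, zeroFrom a = {zeroSeq} := by
  ext ξ
  simp only [mem_iInter, mem_singleton_iff]
  exact ⟨fun h => funext fun j => h j j le_rfl, by rintro rfl a j -; rfl⟩

lemma iInter_zeroBefore : ⋂ a, zeroBefore a = {zeroSeq} := by
  ext ξ
  simp only [mem_iInter, mem_singleton_iff]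
  exact ⟨fun h => funext fun j => h (j + 1) j (lt_add_one j), by rintro rfl a j -; rfl⟩

lemma shift_preimage_zeroSeq : shift ⁻¹' {zeroSeq} = {zeroSeq} := by
  ext ξ
  simp only [mem_preimage, mem_singleton_iff, funext_iff, shift, zeroSeq]
  exact ⟨fun h j => by simpa using h (j - 1), fun h j => h (j + 1)⟩

lemma measure_zeroSeq_eq_zero_or_ae_eq {ν : Measure Seq2} [IsProbabilityMeasure ν]
    (hσ : Ergodic shift ν) : ν {zeroSeq} = 0 ∨ ∀ᵐ ξ ∂ν, ξ = zeroSeq :=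
  (hσ.prob_eq_zero_or_one (measurableSet_singleton _) shift_preimage_zeroSeq).imp_right
    fun h => ae_iff.2 ((prob_compl_eq_zero_iff (measurableSet_singleton _)).2 h)

variable {ν : Measure Seq2} [IsFiniteMeasure ν] (hσ : MeasurePreserving shift ν ν)
  (h0 : ν {zeroSeq} = 0)
include hσ h0

lemma measure_iUnion_zeroFrom : ν (⋃ a, zeroFrom a) = 0 :=
  measure_iUnion_eq_zero_of_preimage_eq hσ measurableSet_zeroFrom monotone_zeroFrom.directed_ge
    shift_preimage_zeroFrom (iInter_zeroFrom ▸ h0)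

lemma measure_iUnion_zeroBefore : ν (⋃ a, zeroBefore a) = 0 :=
  measure_iUnion_eq_zero_of_preimage_eq hσ measurableSet_zeroBefore antitone_zeroBefore.directed_ge
    shift_preimage_zeroBefore (iInter_zeroBefore ▸ h0)

end ZeroSets

section GraphMeasure

variable {ν : Measure Seq2} {g : Seq2 → ℝ}

lemma F_mk (ξ : Seq2) (x : ℝ) : F f0 f1 (ξ, x) = (shift ξ, fiber f0 f1 (ξ 0) x) := by
  unfold F fiber
  split_ifs <;> rfl

lemma H1.measurable_F (h : H1 f0 f1 df0 df1 d) : Measurable (F f0 f1) :=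
  (measurable_shift.comp measurable_fst).prodMk <|
    .ite ((measurableSet_symbol_eq 0 0).preimage measurable_fst)
      ((h.continuous_fiber 0).measurable.comp measurable_snd)
      ((h.continuous_fiber 1).measurable.comp measurable_snd)

lemma H1.measurable_fiber_deriv_comp {β : Type*} [MeasurableSpace β] (h : H1 f0 f1 df0 df1 d)
    {s : β → Fin 2} {x : β → ℝ} (hs : Measurable s) (hx : Measurable x) :
    Measurable fun b => fiber df0 df1 (s b) (x b) :=
  (measurable_from_prod_countable_right (f := fun p : Fin 2 × ℝ => fiber df0 df1 p.1 p.2)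
    h.measurable_fiber_deriv).comp (hs.prodMk hx)

lemma H1.isErgGamma_map_graph (h : H1 f0 f1 df0 df1 d) [IsProbabilityMeasure ν]
    (hσ : Ergodic shift ν) (hloc : ∀ᵐ ξ ∂ν, ξ ∈ SigmaLoc f0 f1 d) (hgm : Measurable g)
    (hdom : ∀ ξ ∈ SigmaLoc f0 f1 d, g ξ ∈ Icc (leftEnd d (ξ 0)) 1)
    (hg : ∀ ξ ∈ SigmaLoc f0 f1 d, fiber f0 f1 (ξ 0) (g ξ) = g (shift ξ)) :
    IsErgGamma f0 f1 d (ν.map fun ξ => (ξ, g ξ)) := by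
  have hG : Measurable fun ξ => (ξ, g ξ) := measurable_id.prodMk hgm
  have herg : Ergodic (F f0 f1) (ν.map fun ξ => (ξ, g ξ)) :=
    hσ.map_of_ae_semiconj hG h.measurable_F (hloc.mono fun ξ hξ => by rw [F_mk, hg ξ hξ])
  have hΓ : ∀ᵐ ξ ∂ν, (ξ, g ξ) ∈ Gamma f0 f1 d :=
    hloc.mono fun ξ hξ => h.mem_Gamma_of_equivariant hg hdom hξ
  refine ⟨⟨Measure.isProbabilityMeasure_map hG.aemeasurable, le_antisymm prob_le_one ?_,
    herg.map_eq⟩, herg⟩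
  calc (1 : ℝ≥0∞) = ν ((fun ξ => (ξ, g ξ)) ⁻¹' Gamma f0 f1 d) :=
        (measure_congr (ae_eq_univ.2 (ae_iff.1 hΓ))).trans measure_univ |>.symm
    _ ≤ _ := Measure.le_map_apply hG.aemeasurable _

lemma map_fst_map_graph (hgm : Measurable g) : (ν.map fun ξ => (ξ, g ξ)).map Prod.fst = ν := by
  have hG : Measurable fun ξ : Seq2 => (ξ, g ξ) := measurable_id.prodMk hgm
  rw [Measure.map_map measurable_fst hG]
  exact Measure.map_id

lemma H1.lyap_map_graph (h : H1 f0 f1 df0 df1 d) (hgm : Measurable g) :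
    lyap df0 df1 (ν.map fun ξ => (ξ, g ξ)) = ∫ ξ, Real.log (fiber df0 df1 (ξ 0) (g ξ)) ∂ν :=
  integral_map (measurable_id.prodMk hgm).aemeasurable <| (Real.measurable_log.comp
    (h.measurable_fiber_deriv_comp ((measurable_pi_apply 0).comp measurable_fst)
      measurable_snd)).aestronglyMeasurable

end GraphMeasure

section Lower

noncomputable def lowerApprox (f0 f1 : ℝ → ℝ) (d : ℝ) (n : ℕ) (ξ : Seq2) : ℝ :=
  aWord f0 f1 d (seqWord ξ 0 n)

/-- The paper's `x_{ξ⁺}`, the left endpoint of `⋂ₙ I_{[ξ₀ … ξ_{n-1}]}`. Off `SigmaLoc` the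
value is junk (`sInf ∅ = 0`). -/
noncomputable def lowerGraph (f0 f1 : ℝ → ℝ) (d : ℝ) (ξ : Seq2) : ℝ :=
  ⨆ n, lowerApprox f0 f1 d n ξ

lemma measurable_lowerApprox (n : ℕ) : Measurable (lowerApprox f0 f1 d n) :=
  measurable_comp_seqWord (aWord f0 f1 d) 0 n

lemma measurable_lowerGraph : Measurable (lowerGraph f0 f1 d) :=
  .iSup measurable_lowerApprox

variable {ξ : Seq2} (hξ : ξ ∈ SigmaLoc f0 f1 d)
include hξ

lemma monotone_lowerApprox : Monotone fun n => lowerApprox f0 f1 d n ξ :=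
  monotone_nat_of_le_succ fun n => csInf_le_csInf (bddBelow_IWord _) (hξ 0 (n + 1))
    fun x hx => by
      rw [IWord, mem_ofPred_eq, seqWord_add, wordAdm_append] at hx
      exact hx.1

variable (h : H1 f0 f1 df0 df1 d)
include h

lemma H1.lowerApprox_mem (n : ℕ) : lowerApprox f0 f1 d n ξ ∈ IWord f0 f1 d (seqWord ξ 0 n) :=
  h.aWord_mem (hξ 0 n)

lemma H1.lowerApprox_mem_Icc (n : ℕ) : lowerApprox f0 f1 d n ξ ∈ Icc (0 : ℝ) 1 :=
  wordAdm.mem_Icc (h.lowerApprox_mem hξ n)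

lemma H1.lowerApprox_succ_mem (n : ℕ) :
    lowerApprox f0 f1 d (n + 1) ξ ∈ Icc (leftEnd d (ξ 0)) 1 := by
  have := h.lowerApprox_mem hξ (n + 1)
  rw [IWord, mem_ofPred_eq, seqWord_succ, h.wordAdm_cons_iff] at this
  exact this.1

lemma H1.bddAbove_lowerApprox : BddAbove (range fun n => lowerApprox f0 f1 d n ξ) :=
  ⟨1, forall_mem_range.2 fun n => (h.lowerApprox_mem_Icc hξ n).2⟩

lemma H1.lowerApprox_le_lowerGraph (n : ℕ) : lowerApprox f0 f1 d n ξ ≤ lowerGraph f0 f1 d ξ :=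
  le_ciSup (h.bddAbove_lowerApprox hξ) n

lemma H1.tendsto_lowerApprox :
    Tendsto (fun n => lowerApprox f0 f1 d n ξ) atTop (𝓝 (lowerGraph f0 f1 d ξ)) :=
  tendsto_atTop_ciSup (monotone_lowerApprox hξ) (h.bddAbove_lowerApprox hξ)

lemma H1.lowerGraph_mem : lowerGraph f0 f1 d ξ ∈ Icc (leftEnd d (ξ 0)) 1 :=
  isClosed_Icc.mem_of_tendsto ((h.tendsto_lowerApprox hξ).comp (tendsto_add_atTop_nat 1))
    (.of_forall (h.lowerApprox_succ_mem hξ))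

lemma H1.fiber_lowerApprox_succ (n : ℕ) :
    fiber f0 f1 (ξ 0) (lowerApprox f0 f1 d (n + 1) ξ) = lowerApprox f0 f1 d n (shift ξ) := by
  have hne := hξ 0 (n + 1)
  rw [seqWord_succ] at hne
  rw [lowerApprox, seqWord_succ, h.fiber_aWord_cons hne, lowerApprox, seqWord_shift]

lemma H1.fiber_lowerGraph :
    fiber f0 f1 (ξ 0) (lowerGraph f0 f1 d ξ) = lowerGraph f0 f1 d (shift ξ) := by
  refine tendsto_nhds_unique (((h.continuous_fiber _).tendsto _).comp
    ((h.tendsto_lowerApprox hξ).comp (tendsto_add_atTop_nat 1))) ?_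
  simpa only [Function.comp_def, h.fiber_lowerApprox_succ hξ] using
    h.tendsto_lowerApprox (shift_mem_SigmaLoc hξ)

lemma H1.fWord_seqWord_lowerApprox (n : ℕ) :
    fWord f0 f1 (seqWord ξ 0 n) (lowerApprox f0 f1 d n ξ) = 0 := by
  induction n generalizing ξ with
  | zero => exact aWord_nil
  | succ n ih =>
    rw [seqWord_succ, fWord_cons, h.fiber_lowerApprox_succ hξ, ← seqWord_shift,
      ih (shift_mem_SigmaLoc hξ)]

/-- If the approximation is exact at step `n`, then `f_ξ^n` sends the graph point to `0`, and only
the symbol `0` is admissible at `0`. -/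
lemma H1.mem_zeroFrom_of_lowerApprox_eq {n : ℕ}
    (heq : lowerApprox f0 f1 d n ξ = lowerGraph f0 f1 d ξ) : ξ ∈ zeroFrom n := by
  set η := shift^[n] ξ with hη_def
  have hη : η ∈ SigmaLoc f0 f1 d := iterate_shift_mem_SigmaLoc hξ n
  have h0 : lowerGraph f0 f1 d η = 0 := by
    rw [← fWord_seqWord_of_equivariant (fun ζ hζ => h.fiber_lowerGraph hζ) hξ n, ← heq,
      h.fWord_seqWord_lowerApprox hξ]
  intro j hj
  obtain ⟨m, rfl⟩ : ∃ m : ℕ, j = m + n := ⟨(j - n).toNat, by omega⟩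
  have hm : lowerApprox f0 f1 d (m + 1) η = 0 :=
    le_antisymm (h0 ▸ h.lowerApprox_le_lowerGraph hη _) (h.lowerApprox_mem_Icc hη _).1
  have hadm := h.lowerApprox_mem hη (m + 1)
  rw [hm, IWord, mem_ofPred_eq, h.wordAdm_zero_iff] at hadm
  have := hadm (η m) (List.mem_ofFn.2 ⟨⟨m, m.lt_succ_self⟩, by simp⟩)
  rwa [hη_def, iterate_shift_apply] at this

end Lower

section Upper

noncomputable def upperApprox (f0 f1 : ℝ → ℝ) (n : ℕ) (ξ : Seq2) : ℝ :=
  fWord f0 f1 (seqWord ξ (-n) n) 1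

/-- The paper's `x_{ξ⁻}`. Off `SigmaLoc` the infimum may be over a family unbounded below, and
the value is junk. -/
noncomputable def upperGraph (f0 f1 : ℝ → ℝ) (ξ : Seq2) : ℝ := ⨅ n, upperApprox f0 f1 n ξ

lemma measurable_upperApprox (n : ℕ) : Measurable (upperApprox f0 f1 n) :=
  measurable_comp_seqWord (fun w => fWord f0 f1 w 1) (-n) n

lemma measurable_upperGraph : Measurable (upperGraph f0 f1) :=
  .iInf measurable_upperApprox

lemma upperApprox_succ (n : ℕ) (ξ : Seq2) :
    upperApprox f0 f1 (n + 1) ξ =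
      fWord f0 f1 (seqWord ξ (-n) n) (fiber f0 f1 (ξ (-n - 1)) 1) := by
  rw [upperApprox, seqWord_succ, fWord_cons]
  congr 3 <;> push_cast <;> ring

lemma upperApprox_succ_shift (n : ℕ) (ξ : Seq2) :
    upperApprox f0 f1 (n + 1) (shift ξ) = fiber f0 f1 (ξ 0) (upperApprox f0 f1 n ξ) := by
  rw [upperApprox, seqWord_shift, show -((n + 1 : ℕ) : ℤ) + 1 = -n by push_cast; ring,
    seqWord_add, fWord_append, neg_add_cancel, seqWord_one]
  rfl

lemma H1.antitone_upperApprox (h : H1 f0 f1 df0 df1 d) (ξ : Seq2) :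
    Antitone fun n => upperApprox f0 f1 n ξ :=
  antitone_nat_of_succ_le fun n => by
    rw [upperApprox_succ]
    exact (h.strictMono_fWord _).monotone (h.fiber_one_le _)

lemma H1.upperApprox_le_one (h : H1 f0 f1 df0 df1 d) (n : ℕ) (ξ : Seq2) :
    upperApprox f0 f1 n ξ ≤ 1 :=
  h.antitone_upperApprox ξ n.zero_le

variable (h : H1 f0 f1 df0 df1 d) {ξ : Seq2} (hξ : ξ ∈ SigmaLoc f0 f1 d)
include h hξ

/-- A point admissible for the window `ξ_{-n} … ξ_0` is pushed by `f_{ξ_{-n}} ∘ ⋯ ∘ f_{ξ_{-1}}` into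
the domain of `f_{ξ_0}`, below `upperApprox n ξ`. -/
lemma H1.leftEnd_le_upperApprox (n : ℕ) : leftEnd d (ξ 0) ≤ upperApprox f0 f1 n ξ := by
  obtain ⟨x, hx⟩ := hξ (-n) (n + 1)
  rw [IWord, mem_ofPred_eq, seqWord_add, wordAdm_append, neg_add_cancel, seqWord_one,
    h.wordAdm_cons_iff] at hx
  exact hx.2.1.1.trans ((h.strictMono_fWord _).monotone (wordAdm.mem_Icc hx.1).2)

lemma H1.upperApprox_mem (n : ℕ) : upperApprox f0 f1 n ξ ∈ Icc (leftEnd d (ξ 0)) 1 :=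
  ⟨h.leftEnd_le_upperApprox hξ n, h.upperApprox_le_one n ξ⟩

lemma H1.bddBelow_upperApprox : BddBelow (range fun n => upperApprox f0 f1 n ξ) :=
  ⟨leftEnd d (ξ 0), forall_mem_range.2 (h.leftEnd_le_upperApprox hξ)⟩

lemma H1.upperGraph_le_upperApprox (n : ℕ) : upperGraph f0 f1 ξ ≤ upperApprox f0 f1 n ξ :=
  ciInf_le (h.bddBelow_upperApprox hξ) n

lemma H1.tendsto_upperApprox :
    Tendsto (fun n => upperApprox f0 f1 n ξ) atTop (𝓝 (upperGraph f0 f1 ξ)) :=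
  tendsto_atTop_ciInf (h.antitone_upperApprox ξ) (h.bddBelow_upperApprox hξ)

lemma H1.upperGraph_mem : upperGraph f0 f1 ξ ∈ Icc (leftEnd d (ξ 0)) 1 :=
  isClosed_Icc.mem_of_tendsto (h.tendsto_upperApprox hξ) (.of_forall (h.upperApprox_mem hξ))

lemma H1.fiber_upperGraph :
    fiber f0 f1 (ξ 0) (upperGraph f0 f1 ξ) = upperGraph f0 f1 (shift ξ) := by
  refine tendsto_nhds_unique (((h.continuous_fiber _).tendsto _).comp (h.tendsto_upperApprox hξ)) ?_
  simpa only [Function.comp_def, upperApprox_succ_shift] using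
    (h.tendsto_upperApprox (shift_mem_SigmaLoc hξ)).comp (tendsto_add_atTop_nat 1)

/-- If the approximation is exact at step `n`, it is constant from then on, and
`f_{ξ_{-m-1}}(1) = 1` forces `ξ_{-m-1} = 0` for every `m ≥ n`. -/
lemma H1.mem_zeroBefore_of_upperApprox_eq {n : ℕ}
    (heq : upperApprox f0 f1 n ξ = upperGraph f0 f1 ξ) : ξ ∈ zeroBefore (-n) := by
  have hconst : ∀ m, n ≤ m → upperApprox f0 f1 m ξ = upperGraph f0 f1 ξ := fun m hm =>
    le_antisymm (heq ▸ h.antitone_upperApprox ξ hm) (h.upperGraph_le_upperApprox hξ m)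
  intro j hj
  obtain ⟨m, hm, rfl⟩ : ∃ m : ℕ, n ≤ m ∧ j = -m - 1 := ⟨(-j - 1).toNat, by omega, by omega⟩
  have := (hconst (m + 1) (by omega)).trans (hconst m hm).symm
  rw [upperApprox_succ, upperApprox] at this
  exact h.eq_zero_of_fiber_one_eq ((h.strictMono_fWord _).injective this)

end Upper

lemma H1.lowerGraph_zeroSeq (h : H1 f0 f1 df0 df1 d) : lowerGraph f0 f1 d zeroSeq = 0 := by
  have : ∀ n, lowerApprox f0 f1 d n zeroSeq = 0 := fun n => by
    have hz : (0 : ℝ) ∈ IWord f0 f1 d (seqWord zeroSeq 0 n) :=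
      h.wordAdm_zero_iff.2 mem_seqWord_zeroSeq
    exact le_antisymm (aWord_le hz) (wordAdm.mem_Icc (h.aWord_mem ⟨0, hz⟩)).1
  simp only [lowerGraph, this, ciSup_const]

lemma H1.upperGraph_zeroSeq (h : H1 f0 f1 df0 df1 d) : upperGraph f0 f1 zeroSeq = 1 := by
  simp only [upperGraph, upperApprox, h.fWord_one_of_forall_eq_zero mem_seqWord_zeroSeq,
    ciInf_const]

section Lyapunov

variable (h1 : H1 f0 f1 df0 df1 d) (h2 : H2 df0 df1 d)
include h1 h2

lemma tendsto_log_fiber_deriv {i : Fin 2} {u : ℕ → ℝ} {x : ℝ} (hu : Tendsto u atTop (𝓝 x))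
    (hmem : ∀ n, u n ∈ Icc (leftEnd d i) 1) (hx : x ∈ Icc (leftEnd d i) 1) :
    Tendsto (fun n => Real.log (fiber df0 df1 i (u n))) atTop
      (𝓝 (Real.log (fiber df0 df1 i x))) :=
  ((h1.continuousOn_fiber_deriv i x hx).tendsto.comp
    (tendsto_nhdsWithin_iff.2 ⟨hu, .of_forall hmem⟩)).log (fiber_deriv_pos h1 h2 hx).ne'

lemma log_gap_lowerGraph_shift_le {ξ : Seq2} (hξ : ξ ∈ SigmaLoc f0 f1 d) {n : ℕ}
    (hs : lowerApprox f0 f1 d (n + 1) ξ < lowerGraph f0 f1 d ξ)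
    (hs' : lowerApprox f0 f1 d (n + 1) (shift ξ) < lowerGraph f0 f1 d (shift ξ)) :
    Real.log (lowerGraph f0 f1 d (shift ξ) - lowerApprox f0 f1 d (n + 1) (shift ξ)) -
        Real.log (lowerGraph f0 f1 d ξ - lowerApprox f0 f1 d (n + 1) ξ) ≤
      Real.log (fiber df0 df1 (ξ 0) (lowerApprox f0 f1 d (n + 1) ξ)) := by
  have ha := h1.lowerApprox_succ_mem hξ n
  have key : lowerGraph f0 f1 d (shift ξ) - lowerApprox f0 f1 d (n + 1) (shift ξ) ≤
      fiber df0 df1 (ξ 0) (lowerApprox f0 f1 d (n + 1) ξ) *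
        (lowerGraph f0 f1 d ξ - lowerApprox f0 f1 d (n + 1) ξ) := calc
    _ ≤ lowerGraph f0 f1 d (shift ξ) - lowerApprox f0 f1 d n (shift ξ) :=
      sub_le_sub_left (monotone_lowerApprox (shift_mem_SigmaLoc hξ) n.le_succ) _
    _ = fiber f0 f1 (ξ 0) (lowerGraph f0 f1 d ξ) -
        fiber f0 f1 (ξ 0) (lowerApprox f0 f1 d (n + 1) ξ) := by
      rw [h1.fiber_lowerGraph hξ, h1.fiber_lowerApprox_succ hξ]
    _ ≤ _ := fiber_sub_le h1 h2 ha.1 hs.le (h1.lowerGraph_mem hξ).2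
  have := Real.log_le_log (sub_pos.2 hs') key
  rw [Real.log_mul (fiber_deriv_pos h1 h2 ha).ne' (sub_pos.2 hs).ne'] at this
  linarith

lemma log_fiber_deriv_le_log_gap_upperGraph_shift {ξ : Seq2} (hξ : ξ ∈ SigmaLoc f0 f1 d)
    {n : ℕ} (hs : upperGraph f0 f1 ξ < upperApprox f0 f1 n ξ) :
    Real.log (fiber df0 df1 (ξ 0) (upperApprox f0 f1 n ξ)) ≤
      Real.log (upperApprox f0 f1 n (shift ξ) - upperGraph f0 f1 (shift ξ)) -
        Real.log (upperApprox f0 f1 n ξ - upperGraph f0 f1 ξ) := by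
  have hb := h1.upperApprox_mem hξ n
  have hpos := mul_pos (fiber_deriv_pos h1 h2 hb) (sub_pos.2 hs)
  have key : fiber df0 df1 (ξ 0) (upperApprox f0 f1 n ξ) *
        (upperApprox f0 f1 n ξ - upperGraph f0 f1 ξ) ≤
      upperApprox f0 f1 n (shift ξ) - upperGraph f0 f1 (shift ξ) := calc
    _ ≤ fiber f0 f1 (ξ 0) (upperApprox f0 f1 n ξ) - fiber f0 f1 (ξ 0) (upperGraph f0 f1 ξ) :=
      le_fiber_sub h1 h2 (h1.upperGraph_mem hξ).1 hs.le hb.2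
    _ = upperApprox f0 f1 (n + 1) (shift ξ) - upperGraph f0 f1 (shift ξ) := by
      rw [h1.fiber_upperGraph hξ, upperApprox_succ_shift]
    _ ≤ _ := sub_le_sub_right (h1.antitone_upperApprox _ n.le_succ) _
  have := Real.log_le_log hpos key
  rw [Real.log_mul (fiber_deriv_pos h1 h2 hb).ne' (sub_pos.2 hs).ne'] at this
  linarith

variable {ν : Measure Seq2} [IsProbabilityMeasure ν] (hσ : MeasurePreserving shift ν ν)
  (hloc : ∀ᵐ ξ ∂ν, ξ ∈ SigmaLoc f0 f1 d) (h0 : ν {zeroSeq} = 0)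
include hσ hloc h0

lemma integral_log_fiber_deriv_lowerGraph_nonneg :
    0 ≤ ∫ ξ, Real.log (fiber df0 df1 (ξ 0) (lowerGraph f0 f1 d ξ)) ∂ν := by
  obtain ⟨C, hC⟩ := exists_abs_log_fiber_deriv_le h1 h2
  have hstrict : ∀ᵐ ξ ∂ν, ξ ∈ SigmaLoc f0 f1 d ∧
      ∀ n, lowerApprox f0 f1 d n ξ < lowerGraph f0 f1 d ξ := by
    filter_upwards [hloc, measure_eq_zero_iff_ae_notMem.1 (measure_iUnion_zeroFrom hσ h0)]
      with ξ hξ hz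
    exact ⟨hξ, fun n => (h1.lowerApprox_le_lowerGraph hξ n).lt_of_ne fun heq =>
      hz (mem_iUnion.2 ⟨n, h1.mem_zeroFrom_of_lowerApprox_eq hξ heq⟩)⟩
  refine integral_nonneg_of_tendsto_of_le_coboundary hσ (C := C)
    (L := fun n ξ => Real.log (fiber df0 df1 (ξ 0) (lowerApprox f0 f1 d (n + 1) ξ)))
    (fun n => (Real.measurable_log.comp (h1.measurable_fiber_deriv_comp (measurable_pi_apply 0)
      (measurable_lowerApprox _))).aestronglyMeasurable)
    (fun n => hloc.mono fun ξ hξ => hC _ _ (h1.lowerApprox_succ_mem hξ n))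
    (hloc.mono fun ξ hξ => tendsto_log_fiber_deriv h1 h2
      ((h1.tendsto_lowerApprox hξ).comp (tendsto_add_atTop_nat 1))
      (h1.lowerApprox_succ_mem hξ) (h1.lowerGraph_mem hξ))
    fun n => ⟨fun ξ => Real.log (lowerGraph f0 f1 d ξ - lowerApprox f0 f1 d (n + 1) ξ),
      Real.measurable_log.comp (measurable_lowerGraph.sub (measurable_lowerApprox _)), ?_⟩
  filter_upwards [hstrict, hσ.quasiMeasurePreserving.ae hstrict] with ξ hξ hξ'
  exact log_gap_lowerGraph_shift_le h1 h2 hξ.1 (hξ.2 _) (hξ'.2 _)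

lemma integral_log_fiber_deriv_upperGraph_nonpos :
    ∫ ξ, Real.log (fiber df0 df1 (ξ 0) (upperGraph f0 f1 ξ)) ∂ν ≤ 0 := by
  obtain ⟨C, hC⟩ := exists_abs_log_fiber_deriv_le h1 h2
  have hstrict : ∀ᵐ ξ ∂ν, ξ ∈ SigmaLoc f0 f1 d ∧
      ∀ n, upperGraph f0 f1 ξ < upperApprox f0 f1 n ξ := by
    filter_upwards [hloc, measure_eq_zero_iff_ae_notMem.1 (measure_iUnion_zeroBefore hσ h0)]
      with ξ hξ hz
    exact ⟨hξ, fun n => (h1.upperGraph_le_upperApprox hξ n).lt_of_ne fun heq =>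
      hz (mem_iUnion.2 ⟨_, h1.mem_zeroBefore_of_upperApprox_eq hξ heq.symm⟩)⟩
  have := integral_nonneg_of_tendsto_of_le_coboundary hσ (C := C)
    (L := fun n ξ => -Real.log (fiber df0 df1 (ξ 0) (upperApprox f0 f1 n ξ)))
    (fun n => (Real.measurable_log.comp (h1.measurable_fiber_deriv_comp (measurable_pi_apply 0)
      (measurable_upperApprox _))).neg.aestronglyMeasurable)
    (fun n => hloc.mono fun ξ hξ => (abs_neg _).trans_le (hC _ _ (h1.upperApprox_mem hξ n)))
    (hloc.mono fun ξ hξ => (tendsto_log_fiber_deriv h1 h2 (h1.tendsto_upperApprox hξ)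
      (h1.upperApprox_mem hξ) (h1.upperGraph_mem hξ)).neg)
    fun n => ⟨fun ξ => -Real.log (upperApprox f0 f1 n ξ - upperGraph f0 f1 ξ),
      (Real.measurable_log.comp ((measurable_upperApprox _).sub measurable_upperGraph)).neg, ?_⟩
  · rwa [integral_neg, neg_nonneg] at this
  filter_upwards [hstrict] with ξ hξ
  linarith [log_fiber_deriv_le_log_gap_upperGraph_shift h1 h2 hξ.1 (hξ.2 n)]

end Lyapunov

theorem statement_17 (f0 f1 df0 df1 : ℝ → ℝ) (d : ℝ) (hH1 : H1 f0 f1 df0 df1 d)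
    (hH2 : H2 df0 df1 d) (ν : Measure Seq2) (hν : IsErgSigma f0 f1 d ν) :
    ∃ μ₁ μ₂ : Measure (Seq2 × ℝ),
      IsErgGamma f0 f1 d μ₁ ∧ IsErgGamma f0 f1 d μ₂ ∧
      μ₁.map Prod.fst = ν ∧ μ₂.map Prod.fst = ν ∧
      lyap df0 df1 μ₁ ≤ 0 ∧ 0 ≤ lyap df0 df1 μ₂ := by
  obtain ⟨⟨_, hsupp, -⟩, hσ⟩ := hν
  have hloc := ae_mem_SigmaLoc hsupp
  refine ⟨_, _, hH1.isErgGamma_map_graph hσ hloc measurable_upperGraph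
      (fun _ => hH1.upperGraph_mem) (fun _ => hH1.fiber_upperGraph),
    hH1.isErgGamma_map_graph hσ hloc measurable_lowerGraph
      (fun _ => hH1.lowerGraph_mem) (fun _ => hH1.fiber_lowerGraph),
    map_fst_map_graph measurable_upperGraph, map_fst_map_graph measurable_lowerGraph, ?_, ?_⟩
  · rw [hH1.lyap_map_graph measurable_upperGraph]
    rcases measure_zeroSeq_eq_zero_or_ae_eq hσ with h0 | h0
    · exact integral_log_fiber_deriv_upperGraph_nonpos hH1 hH2 hσ.toMeasurePreserving hloc h0
    · rw [integral_of_ae_eq_point h0, hH1.upperGraph_zeroSeq]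
      exact Real.log_nonpos hH1.deriv0_one.1.le hH1.deriv0_one.2.le
  · rw [hH1.lyap_map_graph measurable_lowerGraph]
    rcases measure_zeroSeq_eq_zero_or_ae_eq hσ with h0 | h0
    · exact integral_log_fiber_deriv_lowerGraph_nonneg hH1 hH2 hσ.toMeasurePreserving hloc h0
    · rw [integral_of_ae_eq_point h0, hH1.lowerGraph_zeroSeq]
      exact (Real.log_pos hH1.deriv0_zero).le

end DGR
end

section
/- Assume (H1), (H2) and (H2+) with constant M. Let ν be an ergodic σ-invariant Borel probability measure on Σ and let μ₁, μ₂ be ergodic F-invariant Borel probability measures on Γ with π_*μ₁ = ν = π_*μ₂ and μ₁ ≠ μ₂, labeled so that ∫ x dμ₁(ξ,x) < ∫ x dμ₂(ξ,x). Then M⁻¹ ≤ (χ(μ₁) − χ(μ₂)) / (∫ x dμ₂(ξ,x) − ∫ x dμ₁(ξ,x)) ≤ M. -/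
open Set MeasureTheory Filter

/-!
Since both measures project to `ν`, disintegrating them over `ν` yields a single sequence `ξ` and
fiber points `x₁, x₂` over it whose forward orbits are generic for `μ₁` and `μ₂` respectively
(along a common subsequence of times: the mean ergodic theorem gives convergence of Birkhoff
averages in measure, and a subsequence converges almost everywhere). The fiber maps are
increasing, so the order of `x₁` and `x₂` is kept along the orbits, and `∫ x dμ₁ < ∫ x dμ₂`
forces `x₁ ≤ x₂`. By (H2+), along a fiber `x ↦ log f'(x) + M⁻¹ x` is nonincreasing and
`x ↦ log f'(x) + M x` is nondecreasing. Averaging these along the two orbits and passing to the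
limit gives `χ(μ₂) + M⁻¹ m₂ ≤ χ(μ₁) + M⁻¹ m₁` and `χ(μ₁) + M m₁ ≤ χ(μ₂) + M m₂`, where
`mᵢ = ∫ x dμᵢ`; this is the claim.
-/

open Topology

section BirkhoffAverage

variable {α : Type*}

lemma birkhoffAverage_le_birkhoffAverage {f : α → α} {g : α → ℝ} {x y : α}
    (h : ∀ k, g (f^[k] x) ≤ g (f^[k] y)) (n : ℕ) :
    birkhoffAverage ℝ f g n x ≤ birkhoffAverage ℝ f g n y := by
  unfold birkhoffAverage birkhoffSum
  gcongr with k
  exact h k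

lemma le_of_tendsto_birkhoffAverage {f : α → α} {g : α → ℝ} {x y : α} {n : ℕ → ℕ} {a b : ℝ}
    (h : ∀ k, g (f^[k] x) ≤ g (f^[k] y))
    (hx : Tendsto (fun i => birkhoffAverage ℝ f g (n i) x) atTop (𝓝 a))
    (hy : Tendsto (fun i => birkhoffAverage ℝ f g (n i) y) atTop (𝓝 b)) : a ≤ b :=
  le_of_tendsto_of_tendsto' hx hy fun i => birkhoffAverage_le_birkhoffAverage h (n i)

lemma birkhoffAverage_add_const_mul (f : α → α) (g h : α → ℝ) (c : ℝ) (n : ℕ) (x : α) :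
    birkhoffAverage ℝ f (fun y => g y + c * h y) n x =
      birkhoffAverage ℝ f g n x + c * birkhoffAverage ℝ f h n x := by
  simp only [birkhoffAverage, birkhoffSum, smul_eq_mul, Finset.sum_add_distrib, ← Finset.mul_sum]
  ring

lemma Filter.Tendsto.birkhoffAverage_add_const_mul {f : α → α} {g h : α → ℝ} {x : α}
    {n : ℕ → ℕ} {a b : ℝ}
    (H : Tendsto (fun i => (birkhoffAverage ℝ f g (n i) x, birkhoffAverage ℝ f h (n i) x)) atTop
      (𝓝 (a, b))) (c : ℝ) :
    Tendsto (fun i => birkhoffAverage ℝ f (fun y => g y + c * h y) (n i) x) atTop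
      (𝓝 (a + c * b)) := by
  refine (((continuous_fst.add (continuous_const.mul continuous_snd)).tendsto _).comp H).congr
    fun i => ?_
  exact (_root_.birkhoffAverage_add_const_mul f g h c (n i) x).symm

end BirkhoffAverage

section MeanErgodic

variable {α : Type*} [MeasurableSpace α] {T : α → α} {μ : Measure α}

theorem MeasureTheory.MeasurePreserving.integral_birkhoffAverage (hT : MeasurePreserving T μ μ)
    {g : α → ℝ} (hg : Integrable g μ) {n : ℕ} (hn : n ≠ 0) :
    ∫ x, birkhoffAverage ℝ T g n x ∂μ = ∫ x, g x ∂μ := by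
  have hk : ∀ k, ∫ x, g (T^[k] x) ∂μ = ∫ x, g x ∂μ := fun k => by
    have hmap := (hT.iterate k).map_eq
    rw [← integral_map (hT.iterate k).measurable.aemeasurable (by rw [hmap]; exact hg.1), hmap]
  simp only [birkhoffAverage, birkhoffSum, smul_eq_mul]
  rw [integral_const_mul, integral_finsetSum (f := fun k x => g (T^[k] x)) _
      fun k _ => (hT.iterate k).integrable_comp_of_integrable hg,
    Finset.sum_congr rfl fun k _ => hk k, Finset.sum_const, Finset.card_range, nsmul_eq_mul]
  field_simp

noncomputable def MeasureTheory.MeasurePreserving.koopman (hT : MeasurePreserving T μ μ) :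
    Lp ℝ 2 μ →L[ℝ] Lp ℝ 2 μ :=
  (Lp.compMeasurePreservingₗᵢ ℝ T hT).toContinuousLinearMap

lemma MeasureTheory.MeasurePreserving.coeFn_koopman (hT : MeasurePreserving T μ μ)
    (G : Lp ℝ 2 μ) : ⇑(hT.koopman G) =ᵐ[μ] G ∘ T :=
  Lp.coeFn_compMeasurePreserving G hT

lemma MeasureTheory.MeasurePreserving.coeFn_birkhoffSum_koopman (hT : MeasurePreserving T μ μ)
    (n : ℕ) (G : Lp ℝ 2 μ) :
    ⇑(birkhoffSum hT.koopman id n G) =ᵐ[μ] birkhoffSum T G n := by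
  induction n generalizing G with
  | zero => simpa [birkhoffSum_zero'] using Lp.coeFn_zero ℝ 2 μ
  | succ n ih =>
    set U := hT.koopman
    have hU : ⇑(U G) =ᵐ[μ] G ∘ T := hT.coeFn_koopman G
    rw [birkhoffSum_succ']
    filter_upwards [Lp.coeFn_add G (birkhoffSum U id n (U G)), ih (U G),
      hT.quasiMeasurePreserving.birkhoffSum_ae_eq_of_ae_eq hU n] with x h₁ h₂ h₃
    rw [id, h₁, Pi.add_apply, h₂, h₃, birkhoffSum_succ']
    simp only [birkhoffSum, Function.comp_apply, ← Function.iterate_succ_apply' T,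
      Function.iterate_succ_apply]

lemma MeasureTheory.MeasurePreserving.coeFn_birkhoffAverage_koopman
    (hT : MeasurePreserving T μ μ) (n : ℕ) (G : Lp ℝ 2 μ) :
    ⇑(birkhoffAverage ℝ hT.koopman id n G) =ᵐ[μ] birkhoffAverage ℝ T G n := by
  filter_upwards [Lp.coeFn_smul (n : ℝ)⁻¹ (birkhoffSum _ id n G),
    hT.coeFn_birkhoffSum_koopman n G] with x h₁ h₂
  rw [birkhoffAverage, h₁, Pi.smul_apply, h₂]
  rfl

/-- Von Neumann's theorem gives `L²` convergence to the projection `P` of `g` onto the fixed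
points of the Koopman operator; `P` is `T`-invariant, hence constant by ergodicity, and the
constant is `∫ g` because every average has that integral. -/
theorem Ergodic.tendstoInMeasure_birkhoffAverage [IsProbabilityMeasure μ] (hT : Ergodic T μ)
    {g : α → ℝ} (hg : MemLp g 2 μ) :
    TendstoInMeasure μ (birkhoffAverage ℝ T g) atTop (fun _ => ∫ x, g x ∂μ) := by
  have hmp := hT.toMeasurePreserving
  set U := hmp.koopman
  set G := hg.toLp g
  set V := U.eqLocus (1 : Lp ℝ 2 μ →L[ℝ] Lp ℝ 2 μ)
  set P : Lp ℝ 2 μ := (V.orthogonalProjectionOnto G).1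
  have hconv : Tendsto (birkhoffAverage ℝ U id · G) atTop (𝓝 P) :=
    U.tendsto_birkhoffAverage_orthogonalProjection
      (LinearIsometry.norm_toContinuousLinearMap_le _) G
  have hA : ∀ n, ⇑(birkhoffAverage ℝ U id n G) =ᵐ[μ] birkhoffAverage ℝ T g n := fun n =>
    (hmp.coeFn_birkhoffAverage_koopman n G).trans
      (hmp.quasiMeasurePreserving.birkhoffAverage_ae_eq_of_ae_eq ℝ hg.coeFn_toLp n)
  have hPinv : ⇑P ∘ T =ᵐ[μ] P := by
    have hUP : U P = P := (V.orthogonalProjectionOnto G).2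
    have := hmp.coeFn_koopman P
    rw [hUP] at this
    exact this.symm
  obtain ⟨c, hc⟩ := hT.ae_eq_const_of_ae_eq_comp_ae (Lp.aestronglyMeasurable _) hPinv
  have hc_eq : c = ∫ x, g x ∂μ := by
    set one := indicatorConstLp 2 MeasurableSet.univ (measure_ne_top μ univ) (1 : ℝ)
    have hinner : ∀ F : Lp ℝ 2 μ, inner ℝ one F = ∫ x, F x ∂μ := fun F => by
      rw [L2.inner_indicatorConstLp_one, Measure.restrict_univ]
    have hlim := (tendsto_const_nhds (x := one)).inner (𝕜 := ℝ) hconv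
    simp only [hinner] at hlim
    rw [integral_congr_ae hc] at hlim
    simp only [Function.const_apply, integral_const, probReal_univ, one_smul] at hlim
    refine tendsto_nhds_unique hlim (tendsto_const_nhds.congr' ?_)
    filter_upwards [eventually_ne_atTop 0] with n hn
    rw [integral_congr_ae (hA n), hmp.integral_birkhoffAverage (hg.integrable one_le_two) hn]
  refine ((tendstoInMeasure_of_tendsto_Lp hconv).congr_left hA).congr_right ?_
  rw [← hc_eq]
  exact hc

end MeanErgodic

section Subsequences

variable {α ι E F : Type*} [MeasurableSpace α]

theorem MeasureTheory.TendstoInMeasure.prodMk [PseudoEMetricSpace E] [PseudoEMetricSpace F]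
    {μ : Measure α} {l : Filter ι} {f : ι → α → E} {g : ι → α → F} {f' : α → E} {g' : α → F}
    (hf : TendstoInMeasure μ f l f') (hg : TendstoInMeasure μ g l g') :
    TendstoInMeasure μ (fun i x => (f i x, g i x)) l (fun x => (f' x, g' x)) := by
  intro ε hε
  have hsub : ∀ i, {x | ε ≤ edist (f i x, g i x) (f' x, g' x)} ⊆
      {x | ε ≤ edist (f i x) (f' x)} ∪ {x | ε ≤ edist (g i x) (g' x)} := fun i x hx => by
    simpa [Prod.edist_eq, le_max_iff] using hx
  refine tendsto_of_tendsto_of_tendsto_of_le_of_le tendsto_const_nhds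
    (by simpa using (hf ε hε).add (hg ε hε)) (fun i => zero_le)
    (fun i => (measure_mono (hsub i)).trans (measure_union_le _ _))

theorem MeasureTheory.TendstoInMeasure.exists_seq_tendsto_ae₂ [PseudoEMetricSpace E]
    {μ₁ μ₂ : Measure α} {f : ℕ → α → E} {g₁ g₂ : α → E}
    (h₁ : TendstoInMeasure μ₁ f atTop g₁) (h₂ : TendstoInMeasure μ₂ f atTop g₂) :
    ∃ n : ℕ → ℕ, StrictMono n ∧
      (∀ᵐ x ∂μ₁, Tendsto (fun i => f (n i) x) atTop (𝓝 (g₁ x))) ∧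
      ∀ᵐ x ∂μ₂, Tendsto (fun i => f (n i) x) atTop (𝓝 (g₂ x)) := by
  obtain ⟨φ, hφ, hφ₁⟩ := h₁.exists_seq_tendsto_ae
  obtain ⟨ψ, hψ, hψ₂⟩ := (h₂.comp hφ.tendsto_atTop).exists_seq_tendsto_ae
  refine ⟨φ ∘ ψ, hφ.comp hψ, ?_, hψ₂⟩
  filter_upwards [hφ₁] with x hx using hx.comp hψ.tendsto_atTop

end Subsequences

theorem MeasureTheory.Measure.exists_fiber_points_of_ae {β Ω : Type*} [MeasurableSpace β]
    [MeasurableSpace Ω] [StandardBorelSpace Ω] [Nonempty Ω] {μ₁ μ₂ : Measure (β × Ω)}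
    [IsFiniteMeasure μ₁] [IsFiniteMeasure μ₂] [NeZero μ₁] (hfst : μ₁.fst = μ₂.fst)
    {P₁ P₂ : β × Ω → Prop} (h₁ : ∀ᵐ p ∂μ₁, P₁ p) (h₂ : ∀ᵐ p ∂μ₂, P₂ p) :
    ∃ b x₁ x₂, P₁ (b, x₁) ∧ P₂ (b, x₂) := by
  have : NeZero μ₁.fst := ⟨fun h => NeZero.ne μ₁ (by
    rw [← Measure.measure_univ_eq_zero, ← Measure.fst_univ, h, Measure.coe_zero, Pi.zero_apply])⟩
  rw [← μ₁.disintegrate μ₁.condKernel] at h₁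
  rw [← μ₂.disintegrate μ₂.condKernel, ← hfst] at h₂
  obtain ⟨b, hb₁, hb₂⟩ := ((Measure.ae_ae_of_ae_compProd h₁).and
    (Measure.ae_ae_of_ae_compProd h₂)).exists
  obtain ⟨x₁, hx₁⟩ := hb₁.exists
  obtain ⟨x₂, hx₂⟩ := hb₂.exists
  exact ⟨b, x₁, x₂, hx₁, hx₂⟩

lemma measurable_of_hasDerivAt {f f' : ℝ → ℝ} (h : ∀ x, HasDerivAt f (f' x) x) :
    Measurable f' := by
  rw [show f' = deriv f from funext fun x => (h x).deriv.symm]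
  exact measurable_deriv f

lemma abs_le_of_slope_bounds {g : ℝ → ℝ} {a M : ℝ} (ha : 0 ≤ a) (hM : 0 < M)
    (hg : ∀ x ∈ Icc a 1, ∀ y ∈ Icc a 1, x < y →
      M⁻¹ * (y - x) ≤ g x - g y ∧ g x - g y ≤ M * (y - x))
    {x : ℝ} (hx : x ∈ Icc a 1) : |g x| ≤ M + |g 1| := by
  rcases hx.2.eq_or_lt with rfl | hx1
  · linarith
  · obtain ⟨hlow, hup⟩ := hg x hx 1 ⟨by linarith [hx.1], le_rfl⟩ hx1
    have : 0 ≤ M⁻¹ * (1 - x) := by have := hx.2; positivity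
    rw [abs_le]
    constructor <;> nlinarith [abs_le.1 (le_refl |g 1|), hx.1]

namespace DGR

def fiberDomain (d : ℝ) : Set (Seq2 × ℝ) :=
  {p | p.2 ∈ Icc (0 : ℝ) 1 ∧ (p.1 0 = 1 → d ≤ p.2)}

noncomputable def fiberLogDeriv (df0 df1 : ℝ → ℝ) (p : Seq2 × ℝ) : ℝ :=
  Real.log ((if p.1 0 = 0 then df0 else df1) p.2)

variable {f0 f1 df0 df1 : ℝ → ℝ} {d M : ℝ}

lemma Gamma_subset_fiberDomain : Gamma f0 f1 d ⊆ fiberDomain d := fun _ hp =>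
  ⟨(hp.1 0).1, (hp.1 0).2⟩

lemma measurableSet_fiberDomain : MeasurableSet (fiberDomain d) := by
  unfold fiberDomain
  measurability

lemma measurable_fiberLogDeriv (h0 : Measurable df0) (h1 : Measurable df1) :
    Measurable (fiberLogDeriv df0 df1) := by
  have hset : MeasurableSet {p : Seq2 × ℝ | p.1 0 = 0} := by measurability
  have : fiberLogDeriv df0 df1 =
      fun p => if p.1 0 = 0 then Real.log (df0 p.2) else Real.log (df1 p.2) := by
    ext p; unfold fiberLogDeriv; split_ifs <;> rfl
  rw [this]
  exact Measurable.ite hset (by fun_prop) (by fun_prop)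

lemma abs_fiberLogDeriv_le (hd : 0 ≤ d) (hM : H2plus df0 df1 d M) {p : Seq2 × ℝ}
    (hp : p ∈ fiberDomain d) :
    |fiberLogDeriv df0 df1 p| ≤ M + |Real.log (df0 1)| + |Real.log (df1 1)| := by
  obtain ⟨hM1, hM0, hM1'⟩ := hM
  have hMpos : 0 < M := one_pos.trans hM1
  unfold fiberLogDeriv
  split_ifs with h
  · linarith [abs_le_of_slope_bounds le_rfl hMpos hM0 hp.1, abs_nonneg (Real.log (df1 1))]
  · have hmem : p.2 ∈ Icc d 1 := ⟨hp.2 (by omega), hp.1.2⟩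
    linarith [abs_le_of_slope_bounds hd hMpos hM1' hmem, abs_nonneg (Real.log (df0 1))]

lemma ae_mem_fiberDomain {μ : Measure (Seq2 × ℝ)} (hμ : IsInvGamma f0 f1 d μ) :
    ∀ᵐ p ∂μ, p ∈ fiberDomain d := by
  have := hμ.1
  exact (mem_ae_iff_prob_eq_one measurableSet_fiberDomain).2
    (le_antisymm prob_le_one (hμ.2.1 ▸ measure_mono Gamma_subset_fiberDomain))

lemma ae_forall_iterate_mem_fiberDomain {μ : Measure (Seq2 × ℝ)} (hμ : IsErgGamma f0 f1 d μ) :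
    ∀ᵐ p ∂μ, ∀ k, (F f0 f1)^[k] p ∈ fiberDomain d :=
  ae_all_iff.2 fun k =>
    (hμ.2.toMeasurePreserving.quasiMeasurePreserving.iterate k).ae (ae_mem_fiberDomain hμ.1)

theorem tendstoInMeasure_birkhoffAverage_fiber (hH1 : H1 f0 f1 df0 df1 d)
    (hM : H2plus df0 df1 d M) {μ : Measure (Seq2 × ℝ)} (hμ : IsErgGamma f0 f1 d μ) :
    TendstoInMeasure μ
      (fun n p => (birkhoffAverage ℝ (F f0 f1) (fiberLogDeriv df0 df1) n p,
        birkhoffAverage ℝ (F f0 f1) Prod.snd n p)) atTop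
      (fun _ => (lyap df0 df1 μ, ∫ p, p.2 ∂μ)) := by
  have := hμ.1.1
  have hdom := ae_mem_fiberDomain hμ.1
  have hlog : MemLp (fiberLogDeriv df0 df1) 2 μ :=
    MemLp.of_bound (measurable_fiberLogDeriv (measurable_of_hasDerivAt hH1.hasDeriv0)
      (measurable_of_hasDerivAt hH1.hasDeriv1)).aestronglyMeasurable _
      (hdom.mono fun p hp => abs_fiberLogDeriv_le hH1.d_mem.1.le hM hp)
  have hsnd : MemLp (Prod.snd : Seq2 × ℝ → ℝ) 2 μ :=
    MemLp.of_bound measurable_snd.aestronglyMeasurable 1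
      (hdom.mono fun p hp => abs_le.2 ⟨by linarith [hp.1.1], hp.1.2⟩)
  exact (hμ.2.tendstoInMeasure_birkhoffAverage hlog).prodMk
    (hμ.2.tendstoInMeasure_birkhoffAverage hsnd)

lemma F_iterate_fst_eq_and_snd_le (h0 : Monotone f0) (h1 : Monotone f1) {p q : Seq2 × ℝ}
    (hfst : p.1 = q.1) (hle : p.2 ≤ q.2) (k : ℕ) :
    ((F f0 f1)^[k] p).1 = ((F f0 f1)^[k] q).1 ∧ ((F f0 f1)^[k] p).2 ≤ ((F f0 f1)^[k] q).2 := by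
  induction k with
  | zero => exact ⟨hfst, hle⟩
  | succ k ih =>
    rw [Function.iterate_succ_apply', Function.iterate_succ_apply']
    refine ⟨by rw [F, F, ih.1], ?_⟩
    simp only [F, ih.1]
    split_ifs
    exacts [h0 ih.2, h1 ih.2]

lemma fiberLogDeriv_add_mul_le (hM : H2plus df0 df1 d M) {p q : Seq2 × ℝ} (hfst : p.1 = q.1)
    (hp : p ∈ fiberDomain d) (hq : q ∈ fiberDomain d) (hle : p.2 ≤ q.2) :
    fiberLogDeriv df0 df1 q + M⁻¹ * q.2 ≤ fiberLogDeriv df0 df1 p + M⁻¹ * p.2 ∧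
      fiberLogDeriv df0 df1 p + M * p.2 ≤ fiberLogDeriv df0 df1 q + M * q.2 := by
  rcases hle.eq_or_lt with heq | hlt
  · have : p = q := Prod.ext hfst heq
    subst this
    exact ⟨le_rfl, le_rfl⟩
  obtain ⟨-, hM0, hM1⟩ := hM
  unfold fiberLogDeriv
  rw [← hfst]
  split_ifs with h
  · have := hM0 p.2 hp.1 q.2 hq.1 hlt
    constructor <;> linarith
  · have h1 : p.1 0 = 1 := by omega
    have := hM1 p.2 ⟨hp.2 h1, hp.1.2⟩ q.2 ⟨hq.2 (hfst ▸ h1), hq.1.2⟩ hlt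
    constructor <;> linarith

theorem limit_bounds_of_same_fiber (hH1 : H1 f0 f1 df0 df1 d) (hM : H2plus df0 df1 d M)
    {p q : Seq2 × ℝ} (hp : ∀ k, (F f0 f1)^[k] p ∈ fiberDomain d)
    (hq : ∀ k, (F f0 f1)^[k] q ∈ fiberDomain d) (hfst : p.1 = q.1) (hle : p.2 ≤ q.2)
    {n : ℕ → ℕ} {χ₁ χ₂ m₁ m₂ : ℝ}
    (hp_lim : Tendsto (fun i => (birkhoffAverage ℝ (F f0 f1) (fiberLogDeriv df0 df1) (n i) p,
      birkhoffAverage ℝ (F f0 f1) Prod.snd (n i) p)) atTop (𝓝 (χ₁, m₁)))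
    (hq_lim : Tendsto (fun i => (birkhoffAverage ℝ (F f0 f1) (fiberLogDeriv df0 df1) (n i) q,
      birkhoffAverage ℝ (F f0 f1) Prod.snd (n i) q)) atTop (𝓝 (χ₂, m₂))) :
    m₁ ≤ m₂ ∧ M⁻¹ * (m₂ - m₁) ≤ χ₁ - χ₂ ∧ χ₁ - χ₂ ≤ M * (m₂ - m₁) := by
  have horbit := F_iterate_fst_eq_and_snd_le hH1.mono0.monotone hH1.mono1.monotone hfst hle
  have hk := fun k => fiberLogDeriv_add_mul_le hM (horbit k).1 (hp k) (hq k) (horbit k).2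
  have hsnd := le_of_tendsto_birkhoffAverage (fun k => (horbit k).2)
    ((continuous_snd.tendsto _).comp hp_lim) ((continuous_snd.tendsto _).comp hq_lim)
  have hlow := le_of_tendsto_birkhoffAverage (fun k => (hk k).1)
    (hq_lim.birkhoffAverage_add_const_mul M⁻¹) (hp_lim.birkhoffAverage_add_const_mul M⁻¹)
  have hup := le_of_tendsto_birkhoffAverage (fun k => (hk k).2)
    (hp_lim.birkhoffAverage_add_const_mul M) (hq_lim.birkhoffAverage_add_const_mul M)
  exact ⟨hsnd, by linarith, by linarith⟩

theorem statement_18_general (f0 f1 df0 df1 : ℝ → ℝ) (d M : ℝ) (hH1 : H1 f0 f1 df0 df1 d)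
    (hH2p : H2plus df0 df1 d M)
    (ν : Measure Seq2)
    (μ₁ μ₂ : Measure (Seq2 × ℝ))
    (hμ₁ : IsErgGamma f0 f1 d μ₁) (hμ₂ : IsErgGamma f0 f1 d μ₂)
    (hp₁ : μ₁.map Prod.fst = ν) (hp₂ : μ₂.map Prod.fst = ν)
    (hord : (∫ p, p.2 ∂μ₁) < ∫ p, p.2 ∂μ₂) :
    M⁻¹ ≤ (lyap df0 df1 μ₁ - lyap df0 df1 μ₂) / ((∫ p, p.2 ∂μ₂) - ∫ p, p.2 ∂μ₁) ∧
    (lyap df0 df1 μ₁ - lyap df0 df1 μ₂) / ((∫ p, p.2 ∂μ₂) - ∫ p, p.2 ∂μ₁) ≤ M := by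
  have := hμ₁.1.1
  have := hμ₂.1.1
  obtain ⟨n, -, hn₁, hn₂⟩ :=
    (tendstoInMeasure_birkhoffAverage_fiber hH1 hH2p hμ₁).exists_seq_tendsto_ae₂
      (tendstoInMeasure_birkhoffAverage_fiber hH1 hH2p hμ₂)
  obtain ⟨ξ, x₁, x₂, ⟨hx₁, hlim₁⟩, hx₂, hlim₂⟩ :=
    Measure.exists_fiber_points_of_ae (hp₁.trans hp₂.symm)
      ((ae_forall_iterate_mem_fiberDomain hμ₁).and hn₁)
      ((ae_forall_iterate_mem_fiberDomain hμ₂).and hn₂)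
  rcases le_total x₁ x₂ with h | h
  · obtain ⟨-, hlow, hup⟩ := limit_bounds_of_same_fiber hH1 hH2p hx₁ hx₂ rfl h hlim₁ hlim₂
    have hpos := sub_pos.2 hord
    exact ⟨(le_div_iff₀ hpos).2 hlow, (div_le_iff₀ hpos).2 hup⟩
  · exact absurd (limit_bounds_of_same_fiber hH1 hH2p hx₂ hx₁ rfl h hlim₂ hlim₁).1 hord.not_ge

theorem statement_18 (f0 f1 df0 df1 : ℝ → ℝ) (d M : ℝ) (hH1 : H1 f0 f1 df0 df1 d)
    (hH2 : H2 df0 df1 d) (hH2p : H2plus df0 df1 d M)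
    (ν : Measure Seq2) (hν : IsErgSigma f0 f1 d ν)
    (μ₁ μ₂ : Measure (Seq2 × ℝ))
    (hμ₁ : IsErgGamma f0 f1 d μ₁) (hμ₂ : IsErgGamma f0 f1 d μ₂)
    (hp₁ : μ₁.map Prod.fst = ν) (hp₂ : μ₂.map Prod.fst = ν)
    (hne : μ₁ ≠ μ₂) (hord : (∫ p, p.2 ∂μ₁) < ∫ p, p.2 ∂μ₂) :
    M⁻¹ ≤ (lyap df0 df1 μ₁ - lyap df0 df1 μ₂) / ((∫ p, p.2 ∂μ₂) - ∫ p, p.2 ∂μ₁) ∧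
    (lyap df0 df1 μ₁ - lyap df0 df1 μ₂) / ((∫ p, p.2 ∂μ₂) - ∫ p, p.2 ∂μ₁) ≤ M :=
  statement_18_general f0 f1 df0 df1 d M hH1 hH2p ν μ₁ μ₂ hμ₁ hμ₂ hp₁ hp₂ hord

end DGR
end
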